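/- arXiv:1812.10677 — 4 statements merged into one kernel-verified Lean document; each statement's English description precedes it below -/
import Mathlib

section
/- Let $1 < N < p$ and let $\varphi : [1,\infty) \to \mathbb{R}$ be a $C^1$ function with compact support. Then for every $r \geq 1$, $|\varphi(r)|^p \leq 2^{p-1} \left( |\varphi(1)|^p + \left(\frac{p-1}{p-N}\right)^{p-1} r^{p-N} \int_1^r t^{N-1} |\varphi'(t)|^p \, dt \right)$. -/
/-!
By the fundamental theorem of calculus, `|φ r| ≤ |φ 1| + ∫₁ʳ |φ'|`. Hölder's inequality
for the splitting `|φ'| = t ^ ((1 - N) / p) · t ^ ((N - 1) / p) |φ'|` bounds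
`(∫₁ʳ |φ'|) ^ p` by `(∫₁ʳ t ^ ((1 - N) / (p - 1))) ^ (p - 1) · ∫₁ʳ t ^ (N - 1) |φ'| ^ p`,
and since `N < p` the exponent `(1 - N) / (p - 1)` exceeds `-1`, so the first integral is
at most `(p - 1) / (p - N) · r ^ ((p - N) / (p - 1))`. Convexity of `x ↦ x ^ p` joins the
two terms.
-/

open MeasureTheory Set

namespace Real

lemma rpow_add_le_mul_rpow_add_rpow {p a b : ℝ} (ha : 0 ≤ a) (hb : 0 ≤ b) (hp : 1 ≤ p) :
    (a + b) ^ p ≤ 2 ^ (p - 1) * (a ^ p + b ^ p) := by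
  lift a to NNReal using ha
  lift b to NNReal using hb
  exact_mod_cast NNReal.rpow_add_le_mul_rpow_add_rpow a b hp

end Real

lemma abs_le_abs_add_integral_abs_deriv {φ : ℝ → ℝ} {a b : ℝ} (hab : a ≤ b)
    (hφ : ∀ x ∈ uIcc a b, DifferentiableAt ℝ φ x)
    (hφ' : IntervalIntegrable (deriv φ) volume a b) :
    |φ b| ≤ |φ a| + ∫ t in Ioc a b, |deriv φ t| := by
  have hftc : φ b - φ a = ∫ t in a..b, deriv φ t :=
    (intervalIntegral.integral_deriv_eq_sub hφ hφ').symm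
  have hbound : |φ b - φ a| ≤ ∫ t in Ioc a b, |deriv φ t| := by
    rw [hftc, ← intervalIntegral.integral_of_le hab]
    exact intervalIntegral.abs_integral_le_integral_abs hab
  calc |φ b| = |φ a + (φ b - φ a)| := by rw [add_sub_cancel]
    _ ≤ |φ a| + |φ b - φ a| := abs_add_le _ _
    _ ≤ |φ a| + ∫ t in Ioc a b, |deriv φ t| := by gcongr

lemma integral_Ioc_rpow_le {a b y : ℝ} (ha : 0 ≤ a) (hab : a ≤ b) (hy : -1 < y) :
    ∫ t in Ioc a b, t ^ y ≤ b ^ (y + 1) / (y + 1) := by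
  rw [← intervalIntegral.integral_of_le hab, integral_rpow (Or.inl hy)]
  have : 0 < y + 1 := by linarith
  gcongr
  exact sub_le_self _ (Real.rpow_nonneg ha _)

lemma rpow_integral_abs_le_weighted {α : Type*} [MeasurableSpace α] {μ : Measure α} {p : ℝ}
    (hp : 1 < p) {w u : α → ℝ} (hw : AEMeasurable w μ) (hw_pos : ∀ᵐ x ∂μ, 0 < w x)
    (hu : AEMeasurable u μ) (hw_dual : Integrable (fun x => w x ^ (-(p - 1)⁻¹)) μ)
    (hwu : Integrable (fun x => w x * |u x| ^ p) μ) :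
    (∫ x, |u x| ∂μ) ^ p ≤
      (∫ x, w x ^ (-(p - 1)⁻¹) ∂μ) ^ (p - 1) * ∫ x, w x * |u x| ^ p ∂μ := by
  have hp0 : 0 < p := by linarith
  have hp1 : 0 < p - 1 := by linarith
  set q := p.conjExponent
  have hq_def : q = p / (p - 1) := rfl
  have hq : 0 < q := by rw [hq_def]; positivity
  -- Hölder for `w ^ (-1/p)` and `w ^ (1/p) * |u|`, whose product is `|u|`
  set f : α → ℝ := fun x => w x ^ (-p⁻¹)
  set g : α → ℝ := fun x => w x ^ p⁻¹ * |u x|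
  have hf_nonneg : 0 ≤ᵐ[μ] f := hw_pos.mono fun x hx => Real.rpow_nonneg hx.le _
  have hg_nonneg : 0 ≤ᵐ[μ] g := hw_pos.mono fun x hx => by positivity
  have hfg : (fun x => f x * g x) =ᵐ[μ] fun x => |u x| := by
    filter_upwards [hw_pos] with x hx
    rw [← mul_assoc, ← Real.rpow_add hx, neg_add_cancel, Real.rpow_zero, one_mul]
  have hf_q : (fun x => f x ^ q) =ᵐ[μ] fun x => w x ^ (-(p - 1)⁻¹) := by
    filter_upwards [hw_pos] with x hx
    rw [← Real.rpow_mul hx.le, hq_def]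
    field_simp
  have hg_p : (fun x => g x ^ p) =ᵐ[μ] fun x => w x * |u x| ^ p := by
    filter_upwards [hw_pos] with x hx
    rw [Real.mul_rpow (by positivity) (abs_nonneg _), ← Real.rpow_mul hx.le,
      inv_mul_cancel₀ hp0.ne', Real.rpow_one]
  have hf : MemLp f (ENNReal.ofReal q) μ := by
    refine (integrable_norm_rpow_iff (hw.pow_const _).aestronglyMeasurable (by simpa using hq)
      ENNReal.ofReal_ne_top).1 ?_
    rw [ENNReal.toReal_ofReal hq.le]
    refine (hw_dual.congr hf_q.symm).congr ?_
    filter_upwards [hf_nonneg] with x hx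
    rw [Real.norm_of_nonneg hx]
  have hg : MemLp g (ENNReal.ofReal p) μ := by
    refine (integrable_norm_rpow_iff ((hw.pow_const _).mul hu.abs).aestronglyMeasurable
      (by simpa using hp0) ENNReal.ofReal_ne_top).1 ?_
    rw [ENNReal.toReal_ofReal hp0.le]
    refine (hwu.congr hg_p.symm).congr ?_
    filter_upwards [hg_nonneg] with x hx
    change g x ^ p = ‖g x‖ ^ p
    rw [Real.norm_of_nonneg hx]
  have holder := integral_mul_le_Lp_mul_Lq_of_nonneg
    (Real.HolderConjugate.conjExponent hp).symm hf_nonneg hg_nonneg hf hg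
  rw [integral_congr_ae hfg, integral_congr_ae hf_q, integral_congr_ae hg_p] at holder
  have hA : 0 ≤ ∫ x, w x ^ (-(p - 1)⁻¹) ∂μ :=
    integral_nonneg_of_ae (hw_pos.mono fun x hx => Real.rpow_nonneg hx.le _)
  have hB : 0 ≤ ∫ x, w x * |u x| ^ p ∂μ :=
    integral_nonneg_of_ae (hw_pos.mono fun x hx => by positivity)
  calc (∫ x, |u x| ∂μ) ^ p
      ≤ ((∫ x, w x ^ (-(p - 1)⁻¹) ∂μ) ^ (1 / q) *
          (∫ x, w x * |u x| ^ p ∂μ) ^ (1 / p)) ^ p :=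
        Real.rpow_le_rpow (integral_nonneg fun _ => abs_nonneg _) holder hp0.le
    _ = (∫ x, w x ^ (-(p - 1)⁻¹) ∂μ) ^ (p - 1) * ∫ x, w x * |u x| ^ p ∂μ := by
        rw [Real.mul_rpow (by positivity) (by positivity), ← Real.rpow_mul hA,
          ← Real.rpow_mul hB, one_div_mul_cancel hp0.ne', Real.rpow_one, hq_def]
        congr 2
        field_simp

lemma integral_Ioc_one_rpow_dual_weight_le {p N r : ℝ} (hp : 1 < p) (hNp : N < p)
    (hr : 1 ≤ r) :
    ∫ t in Ioc 1 r, (t ^ (N - 1)) ^ (-(p - 1)⁻¹) ≤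
      (p - 1) / (p - N) * r ^ ((p - N) / (p - 1)) := by
  have hp1 : 0 < p - 1 := by linarith
  have hexp : (1 - N) / (p - 1) + 1 = (p - N) / (p - 1) := by field_simp; ring
  calc ∫ t in Ioc 1 r, (t ^ (N - 1)) ^ (-(p - 1)⁻¹)
      = ∫ t in Ioc 1 r, t ^ ((1 - N) / (p - 1)) := by
        refine setIntegral_congr_fun measurableSet_Ioc fun t ht => ?_
        rw [← Real.rpow_mul (by linarith [ht.1])]
        ring_nf
    _ ≤ r ^ ((1 - N) / (p - 1) + 1) / ((1 - N) / (p - 1) + 1) :=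
        integral_Ioc_rpow_le zero_le_one hr (by rw [lt_div_iff₀ hp1]; linarith)
    _ = (p - 1) / (p - N) * r ^ ((p - N) / (p - 1)) := by
        rw [hexp, div_div_eq_mul_div]
        ring

lemma rpow_integral_Ioc_abs_le_power_weighted {p s a b : ℝ} (hp : 1 < p) (ha : 0 < a)
    {u : ℝ → ℝ} (hu : ContinuousOn u (Icc a b)) :
    (∫ t in Ioc a b, |u t|) ^ p ≤
      (∫ t in Ioc a b, (t ^ s) ^ (-(p - 1)⁻¹)) ^ (p - 1) *
        ∫ t in Ioc a b, t ^ s * |u t| ^ p := by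
  have hpos : ∀ t ∈ Icc a b, 0 < t := fun t ht => ha.trans_le ht.1
  have hw : ContinuousOn (fun t : ℝ => t ^ s) (Icc a b) :=
    continuousOn_id.rpow_const fun t ht => Or.inl (hpos t ht).ne'
  have hw_dual : ContinuousOn (fun t : ℝ => (t ^ s) ^ (-(p - 1)⁻¹)) (Icc a b) :=
    hw.rpow_const fun t ht => Or.inl (Real.rpow_pos_of_pos (hpos t ht) _).ne'
  have hwu : ContinuousOn (fun t => t ^ s * |u t| ^ p) (Icc a b) :=
    hw.mul (hu.abs.rpow_const fun _ _ => Or.inr (by linarith))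
  refine rpow_integral_abs_le_weighted hp (by fun_prop) ?_
    ((hu.mono Ioc_subset_Icc_self).aemeasurable measurableSet_Ioc)
    (hw_dual.integrableOn_Icc.mono_set Ioc_subset_Icc_self)
    (hwu.integrableOn_Icc.mono_set Ioc_subset_Icc_self)
  exact (ae_restrict_iff' measurableSet_Ioc).2 <| ae_of_all _ fun t ht =>
    Real.rpow_pos_of_pos (hpos t (Ioc_subset_Icc_self ht)) _

theorem radial_estimate_supercritical_general (p N : ℝ) (hN : 1 < N) (hNp : N < p)
    (φ : ℝ → ℝ) (hφ : ContDiff ℝ 1 φ)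
    (r : ℝ) (hr : 1 ≤ r) :
    |φ r| ^ p ≤ 2 ^ (p - 1) *
      (|φ 1| ^ p + ((p - 1) / (p - N)) ^ (p - 1) * r ^ (p - N) *
        ∫ t in Ioc 1 r, t ^ (N - 1) * |deriv φ t| ^ p) := by
  have hp : 1 < p := hN.trans hNp
  have hφ' : Continuous (deriv φ) := hφ.continuous_deriv le_rfl
  have hpos : ∀ t ∈ Ioc (1 : ℝ) r, 0 < t := fun t ht => zero_lt_one.trans ht.1
  have hdual_nonneg : 0 ≤ ∫ t in Ioc 1 r, (t ^ (N - 1)) ^ (-(p - 1)⁻¹) :=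
    setIntegral_nonneg measurableSet_Ioc fun t ht => by have := hpos t ht; positivity
  have hB : 0 ≤ ∫ t in Ioc 1 r, t ^ (N - 1) * |deriv φ t| ^ p :=
    setIntegral_nonneg measurableSet_Ioc fun t ht => by have := hpos t ht; positivity
  calc |φ r| ^ p ≤ (|φ 1| + ∫ t in Ioc 1 r, |deriv φ t|) ^ p := by
        gcongr
        exact abs_le_abs_add_integral_abs_deriv hr
          (fun x _ => (hφ.differentiable one_ne_zero).differentiableAt)
          (hφ'.intervalIntegrable 1 r)
    _ ≤ 2 ^ (p - 1) * (|φ 1| ^ p + (∫ t in Ioc 1 r, |deriv φ t|) ^ p) :=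
        Real.rpow_add_le_mul_rpow_add_rpow (abs_nonneg _)
          (integral_nonneg fun _ => abs_nonneg _) hp.le
    _ ≤ 2 ^ (p - 1) * (|φ 1| ^ p + ((p - 1) / (p - N) * r ^ ((p - N) / (p - 1))) ^ (p - 1) *
          ∫ t in Ioc 1 r, t ^ (N - 1) * |deriv φ t| ^ p) := by
        gcongr
        refine (rpow_integral_Ioc_abs_le_power_weighted (s := N - 1) hp zero_lt_one
          hφ'.continuousOn).trans ?_
        gcongr
        exact integral_Ioc_one_rpow_dual_weight_le hp hNp hr
    _ = _ := by
        rw [Real.mul_rpow (div_nonneg (by linarith) (by linarith)) (by positivity),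
          ← Real.rpow_mul (by linarith), div_mul_cancel₀ _ (by linarith : p - 1 ≠ 0)]

theorem radial_estimate_supercritical (p N : ℝ) (hN : 1 < N) (hNp : N < p)
    (φ : ℝ → ℝ) (hφ : ContDiff ℝ 1 φ) (hsupp : HasCompactSupport φ)
    (r : ℝ) (hr : 1 ≤ r) :
    |φ r| ^ p ≤ 2 ^ (p - 1) *
      (|φ 1| ^ p + ((p - 1) / (p - N)) ^ (p - 1) * r ^ (p - N) *
        ∫ t in Ioc 1 r, t ^ (N - 1) * |deriv φ t| ^ p) :=
  radial_estimate_supercritical_general p N hN hNp φ hφ r hr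
end

section
/- (Muckenhoupt condition / weighted Hardy inequality) Let $1 < p < \infty$ with conjugate exponent $p'$, and let $u, v$ be nonnegative measurable functions on $(0,\infty)$ with $v > 0$ a.e. Suppose $A := \sup_{t>0} \left( \int_0^t u(s)\,ds \right)^{1/p} \left( \int_t^\infty v(s)^{1-p'}\,ds \right)^{1/p'} < \infty$. Then for every measurable function $f$ on $(0,\infty)$, $\left( \int_0^\infty \left| \int_s^\infty f(t)\,dt \right|^p u(s)\,ds \right)^{1/p} \leq p^{1/p} (p')^{1/p'} A \left( \int_0^\infty |f(s)|^p v(s)\,ds \right)^{1/p}$. -/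
open MeasureTheory Set Filter
open scoped ENNReal

/-!
Write `Φ s = ∫_0^s u` and `W t = ∫_t^∞ v^{1-p'}`, so that `Φ^{1/p} W^{1/p'} ≤ A`. Hölder's
inequality with the weight `v W^{1/p'}` gives, for `F s = ∫_s^∞ f`,
`|F s|^p ≤ (∫_s^∞ v^{1-p'} W^{-1/p})^{p-1} ∫_s^∞ |f|^p v W^{1/p'}`, and the first integral is at
most `p' W(s)^{1/p'}`. Bounding `W(s)^{1/p'}` by `A Φ(s)^{-1/p}` and exchanging the order of
integration leaves `∫_0^t u Φ^{-1/p'} ≤ p Φ(t)^{1/p}`, after which `Φ(t)^{1/p} W(t)^{1/p'} ≤ A`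
once more.

Both integral bounds are instances of `∫ L^{-r} dν ≤ (1-r)⁻¹ ν(univ)^{1-r}`, valid as soon as
`ν {L < c} ≤ c` for every `c`; this follows from the layer-cake formula, and the level-set
condition holds for `L t = ν (t, ∞)` and `L t = ν (-∞, t]` when `ν` has no atoms. This replaces
the chain rule for `W^{1/p'}` and `Φ^{1/p}`, so no absolute continuity is needed, and `Φ`, `W`
are taken to be the distribution functions `s ↦ μ (Iic s)`, `t ↦ ν (Ioi t)` of the measures
`μ = u dt` on `(0, ∞)` and `ν = v^{1-p'} dt`.
-/

theorem Real.HolderConjugate.one_sub_one_div {p q : ℝ} (hpq : p.HolderConjugate q) :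
    1 - 1 / p = 1 / q := by
  rw [one_div, one_div, hpq.one_sub_inv]

theorem measure_setOf_measure_Ioi_lt_le (ν : Measure ℝ) [NullSingletonClass ν] (c : ℝ≥0∞) :
    ν {y | ν (Ioi y) < c} ≤ c := by
  set E := {y | ν (Ioi y) < c}
  set Q := {q : ℚ // (q : ℝ) ∈ E}
  -- `E` is an upper set: apart from its minimum it is covered by the rays over its rationals.
  have hcover : E ⊆ {x ∈ E | ∀ z ∈ E, x ≤ z} ∪ ⋃ q : Q, Ioi (q : ℝ) := by
    intro x hx
    by_cases hmin : ∀ z ∈ E, x ≤ z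
    · exact Or.inl ⟨hx, hmin⟩
    obtain ⟨z, hz, hzx⟩ : ∃ z ∈ E, z < x := by simpa using hmin
    obtain ⟨q, hzq, hqx⟩ := exists_rat_btwn hzx
    have hq : (q : ℝ) ∈ E := (measure_mono (Ioi_subset_Ioi hzq.le)).trans_lt hz
    exact Or.inr (mem_iUnion.2 ⟨⟨q, hq⟩, hqx⟩)
  have hmin : ({x ∈ E | ∀ z ∈ E, x ≤ z} : Set ℝ).Subsingleton :=
    fun x hx y hy => le_antisymm (hx.2 y hy.1) (hy.2 x hx.1)
  have hdir : Directed (· ⊆ ·) fun q : Q => Ioi (q : ℝ) :=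
    Antitone.directed_le fun a b hab => Ioi_subset_Ioi (by exact_mod_cast hab)
  calc ν E ≤ ν {x ∈ E | ∀ z ∈ E, x ≤ z} + ν (⋃ q : Q, Ioi (q : ℝ)) :=
        (measure_mono hcover).trans (measure_union_le _ _)
    _ = ⨆ q : Q, ν (Ioi (q : ℝ)) := by rw [hmin.measure_zero, zero_add, hdir.measure_iUnion]
    _ ≤ c := iSup_le fun q => q.2.le

theorem measure_setOf_measure_Iic_lt_le (ν : Measure ℝ) [NullSingletonClass ν] (c : ℝ≥0∞) :
    ν {y | ν (Iic y) < c} ≤ c := by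
  set E := {y | ν (Iic y) < c}
  set Q := {q : ℚ // (q : ℝ) ∈ E}
  have hcover : E ⊆ {x ∈ E | ∀ z ∈ E, z ≤ x} ∪ ⋃ q : Q, Iic (q : ℝ) := by
    intro x hx
    by_cases hmax : ∀ z ∈ E, z ≤ x
    · exact Or.inl ⟨hx, hmax⟩
    obtain ⟨z, hz, hxz⟩ : ∃ z ∈ E, x < z := by simpa using hmax
    obtain ⟨q, hxq, hqz⟩ := exists_rat_btwn hxz
    have hq : (q : ℝ) ∈ E := (measure_mono (Iic_subset_Iic.2 hqz.le)).trans_lt hz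
    exact Or.inr (mem_iUnion.2 ⟨⟨q, hq⟩, hxq.le⟩)
  have hmax : ({x ∈ E | ∀ z ∈ E, z ≤ x} : Set ℝ).Subsingleton :=
    fun x hx y hy => le_antisymm (hy.2 x hx.1) (hx.2 y hy.1)
  have hdir : Directed (· ⊆ ·) fun q : Q => Iic (q : ℝ) :=
    Monotone.directed_le fun a b hab => Iic_subset_Iic.2 (by exact_mod_cast hab)
  calc ν E ≤ ν {x ∈ E | ∀ z ∈ E, z ≤ x} + ν (⋃ q : Q, Iic (q : ℝ)) :=
        (measure_mono hcover).trans (measure_union_le _ _)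
    _ = ⨆ q : Q, ν (Iic (q : ℝ)) := by rw [hmax.measure_zero, zero_add, hdir.measure_iUnion]
    _ ≤ c := iSup_le fun q => q.2.le

theorem measure_setOf_eq_zero_of_forall_measure_setOf_lt_le {α : Type*} [MeasurableSpace α]
    {ν : Measure α} {L : α → ℝ≥0∞} (hlev : ∀ c, ν {x | L x < c} ≤ c) :
    ν {x | L x = 0} = 0 := by
  refine nonpos_iff_eq_zero.1 (le_of_forall_pos_le_add fun c hc => ?_)
  calc ν {x | L x = 0} ≤ ν {x | L x < c} := measure_mono fun x (hx : L x = 0) => by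
        simpa [hx] using hc
    _ ≤ 0 + c := by simpa using hlev c

theorem lintegral_Ioi_rpow_neg_sub_one {r c : ℝ} (hr : 0 < r) (hc : 0 < c) :
    ∫⁻ t in Ioi c, ENNReal.ofReal (t ^ (-r - 1)) = ENNReal.ofReal (c ^ (-r) / r) := by
  have ha : -r - 1 < -1 := by linarith
  rw [← ofReal_integral_eq_lintegral_ofReal (integrableOn_Ioi_rpow_of_lt ha hc),
    integral_Ioi_rpow_of_lt ha hc, sub_add_cancel, neg_div_neg_eq]
  filter_upwards [ae_restrict_mem measurableSet_Ioi] with t ht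
  exact Real.rpow_nonneg (hc.trans ht).le _

theorem lintegral_Ioc_zero_rpow {a m : ℝ} (ha : -1 < a) (hm : 0 ≤ m) :
    ∫⁻ t in Ioc 0 m, ENNReal.ofReal (t ^ a) = ENNReal.ofReal (m ^ (a + 1) / (a + 1)) := by
  have hint : IntegrableOn (fun t : ℝ => t ^ a) (Ioc 0 m) :=
    (intervalIntegrable_iff_integrableOn_Ioc_of_le hm).1
      (intervalIntegral.intervalIntegrable_rpow' ha)
  rw [← ofReal_integral_eq_lintegral_ofReal hint, ← intervalIntegral.integral_of_le hm,
    integral_rpow (Or.inl ha), Real.zero_rpow (by linarith), sub_zero]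
  filter_upwards [ae_restrict_mem measurableSet_Ioc] with t ht
  exact Real.rpow_nonneg ht.1.le _

theorem ENNReal.rpow_neg_eq_lintegral_indicator {r : ℝ} (hr : 0 < r) {a : ℝ≥0∞} (ha : a ≠ 0) :
    a ^ (-r) = ENNReal.ofReal r * ∫⁻ l in Ioi (0 : ℝ),
      ENNReal.ofReal (l ^ (-r - 1)) * (Iio (ENNReal.ofReal l)).indicator 1 a := by
  rcases eq_or_ne a ⊤ with rfl | hatop
  · simp [ENNReal.top_rpow_of_neg (neg_neg_iff_pos.2 hr)]
  have hb : 0 < a.toReal := ENNReal.toReal_pos ha hatop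
  have hind : ∀ l : ℝ, ENNReal.ofReal (l ^ (-r - 1)) * (Iio (ENNReal.ofReal l)).indicator 1 a =
      (Ioi a.toReal).indicator (fun l => ENNReal.ofReal (l ^ (-r - 1))) l := by
    intro l
    by_cases hl : a.toReal < l <;> simp [indicator, hl, ENNReal.lt_ofReal_iff_toReal_lt hatop]
  simp_rw [hind]
  rw [setLIntegral_indicator measurableSet_Ioi, inter_eq_left.2 (Ioi_subset_Ioi hb.le),
    lintegral_Ioi_rpow_neg_sub_one hr hb, ← ENNReal.ofReal_mul hr.le,
    mul_div_cancel₀ _ hr.ne', ← ENNReal.ofReal_rpow_of_pos hb, ENNReal.ofReal_toReal hatop]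

theorem ofReal_mul_lintegral_rpow_neg_sub_one_mul_min {r : ℝ} (hr0 : 0 < r) (hr1 : r < 1)
    {M : ℝ≥0∞} (hM : M ≠ ⊤) :
    ENNReal.ofReal r * ∫⁻ l in Ioi (0 : ℝ), ENNReal.ofReal (l ^ (-r - 1)) *
      min (ENNReal.ofReal l) M = ENNReal.ofReal (1 / (1 - r)) * M ^ (1 - r) := by
  rcases eq_or_ne M 0 with rfl | hM0
  · simp [ENNReal.zero_rpow_of_pos (sub_pos.2 hr1)]
  obtain ⟨m, hm, rfl⟩ : ∃ m : ℝ, 0 < m ∧ M = ENNReal.ofReal m :=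
    ⟨M.toReal, ENNReal.toReal_pos hM0 hM, (ENNReal.ofReal_toReal hM).symm⟩
  have hlow : ∫⁻ l in Ioc 0 m, ENNReal.ofReal (l ^ (-r - 1)) * min (ENNReal.ofReal l)
      (ENNReal.ofReal m) = ENNReal.ofReal (m ^ (1 - r) / (1 - r)) := by
    rw [setLIntegral_congr_fun measurableSet_Ioc (g := fun l => ENNReal.ofReal (l ^ (-r)))
      fun l hl => ?_, lintegral_Ioc_zero_rpow (by linarith) hm.le, neg_add_eq_sub]
    rw [min_eq_left (ENNReal.ofReal_le_ofReal hl.2), ← ENNReal.ofReal_mul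
      (Real.rpow_nonneg hl.1.le _), ← Real.rpow_add_one hl.1.ne', sub_add_cancel]
  have hhigh : ∫⁻ l in Ioi m, ENNReal.ofReal (l ^ (-r - 1)) * min (ENNReal.ofReal l)
      (ENNReal.ofReal m) = ENNReal.ofReal (m ^ (-r) / r * m) := by
    rw [setLIntegral_congr_fun measurableSet_Ioi
      (g := fun l => ENNReal.ofReal (l ^ (-r - 1)) * ENNReal.ofReal m)
      fun l hl => by rw [min_eq_right (ENNReal.ofReal_le_ofReal (le_of_lt hl))],
      lintegral_mul_const' _ _ ENNReal.ofReal_ne_top, lintegral_Ioi_rpow_neg_sub_one hr0 hm,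
      ← ENNReal.ofReal_mul (by positivity)]
  rw [← Ioc_union_Ioi_eq_Ioi hm.le, lintegral_union measurableSet_Ioi Ioc_disjoint_Ioi_same,
    hlow, hhigh, ← ENNReal.ofReal_add (by positivity) (by positivity),
    ← ENNReal.ofReal_mul hr0.le, ENNReal.ofReal_rpow_of_pos hm,
    ← ENNReal.ofReal_mul (by simp; linarith)]
  congr 1
  have h1r : 1 - r ≠ 0 := by linarith
  rw [Real.rpow_sub hm, Real.rpow_one, Real.rpow_neg hm.le]
  field_simp
  ring

theorem lintegral_rpow_neg_le_of_measure_setOf_lt_le {α : Type*} [MeasurableSpace α]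
    {ν : Measure α} {L : α → ℝ≥0∞} (hL : Measurable L) {r : ℝ} (hr0 : 0 < r) (hr1 : r < 1)
    (hlev : ∀ c, ν {x | L x < c} ≤ c) :
    ∫⁻ x, L x ^ (-r) ∂ν ≤ ENNReal.ofReal (1 / (1 - r)) * ν univ ^ (1 - r) := by
  rcases eq_or_ne (ν univ) ⊤ with htop | hfin
  · rw [htop, ENNReal.top_rpow_of_pos (sub_pos.2 hr1), ENNReal.mul_top (by simpa using hr1)]
    exact le_top
  have : IsFiniteMeasure ν := ⟨hfin.lt_top⟩
  have hL0 : ∀ᵐ x ∂ν, L x ≠ 0 :=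
    measure_eq_zero_iff_ae_notMem.1 (measure_setOf_eq_zero_of_forall_measure_setOf_lt_le hlev)
  have hmeas : Measurable fun l : ℝ => ENNReal.ofReal (l ^ (-r - 1)) :=
    (measurable_id.pow_const _).ennreal_ofReal
  have hprod : Measurable fun x : α × ℝ =>
      ENNReal.ofReal (x.2 ^ (-r - 1)) * (Iio (ENNReal.ofReal x.2)).indicator 1 (L x.1) :=
    (hmeas.comp measurable_snd).mul (measurable_const.indicator (measurableSet_lt
      (hL.comp measurable_fst) (ENNReal.measurable_ofReal.comp measurable_snd)))
  calc ∫⁻ x, L x ^ (-r) ∂ν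
      = ∫⁻ x, ENNReal.ofReal r * (∫⁻ l in Ioi (0 : ℝ),
          ENNReal.ofReal (l ^ (-r - 1)) * (Iio (ENNReal.ofReal l)).indicator 1 (L x)) ∂ν :=
        lintegral_congr_ae (hL0.mono fun x hx => ENNReal.rpow_neg_eq_lintegral_indicator hr0 hx)
    _ = ENNReal.ofReal r * ∫⁻ l in Ioi (0 : ℝ),
          ENNReal.ofReal (l ^ (-r - 1)) * ν (L ⁻¹' Iio (ENNReal.ofReal l)) := by
        rw [lintegral_const_mul' _ _ ENNReal.ofReal_ne_top,
          lintegral_lintegral_swap hprod.aemeasurable]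
        congr 1
        refine lintegral_congr fun l => ?_
        rw [lintegral_const_mul' _ _ ENNReal.ofReal_ne_top,
          ← lintegral_indicator_one (hL measurableSet_Iio)]
        rfl
    _ ≤ ENNReal.ofReal r * ∫⁻ l in Ioi (0 : ℝ),
          ENNReal.ofReal (l ^ (-r - 1)) * min (ENNReal.ofReal l) (ν univ) := by
        gcongr with l
        exact le_min (hlev _) (measure_mono (subset_univ _))
    _ = ENNReal.ofReal (1 / (1 - r)) * ν univ ^ (1 - r) :=
        ofReal_mul_lintegral_rpow_neg_sub_one_mul_min hr0 hr1 hfin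

theorem setLIntegral_Ioi_measure_Ioi_rpow_neg_le (ν : Measure ℝ) [NullSingletonClass ν]
    {r : ℝ} (hr0 : 0 < r) (hr1 : r < 1) (s : ℝ) :
    ∫⁻ t in Ioi s, ν (Ioi t) ^ (-r) ∂ν ≤ ENNReal.ofReal (1 / (1 - r)) * ν (Ioi s) ^ (1 - r) := by
  have hm : Measurable fun t => ν (Ioi t) :=
    Antitone.measurable fun a b hab => measure_mono (Ioi_subset_Ioi hab)
  simpa using lintegral_rpow_neg_le_of_measure_setOf_lt_le hm hr0 hr1
    fun c => (Measure.restrict_apply_le _ _).trans (measure_setOf_measure_Ioi_lt_le ν c)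

theorem setLIntegral_Iio_measure_Iic_rpow_neg_le (μ : Measure ℝ) [NullSingletonClass μ]
    {r : ℝ} (hr0 : 0 < r) (hr1 : r < 1) (t : ℝ) :
    ∫⁻ s in Iio t, μ (Iic s) ^ (-r) ∂μ ≤ ENNReal.ofReal (1 / (1 - r)) * μ (Iio t) ^ (1 - r) := by
  have hm : Measurable fun s => μ (Iic s) :=
    Monotone.measurable fun a b hab => measure_mono (Iic_subset_Iic.2 hab)
  simpa using lintegral_rpow_neg_le_of_measure_setOf_lt_le hm hr0 hr1
    fun c => (Measure.restrict_apply_le _ _).trans (measure_setOf_measure_Iic_lt_le μ c)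

theorem lintegral_rpow_le_weighted_Lp_mul_Lq {α : Type*} [MeasurableSpace α] (μ : Measure α)
    {p q : ℝ} (hpq : p.HolderConjugate q) {F w : α → ℝ≥0∞} (hF : AEMeasurable F μ)
    (hw : AEMeasurable w μ) (hw0 : ∀ᵐ x ∂μ, w x ≠ 0) (hwtop : ∀ᵐ x ∂μ, w x ≠ ⊤) :
    (∫⁻ x, F x ∂μ) ^ p ≤ (∫⁻ x, w x ^ (1 - q) ∂μ) ^ (p - 1) * ∫⁻ x, F x ^ p * w x ∂μ := by
  have hfac : ∀ᵐ x ∂μ, F x = (F x * w x ^ (1 / p)) * w x ^ (-(1 / p)) := by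
    filter_upwards [hw0, hwtop] with x h0 htop
    rw [mul_assoc, ← ENNReal.rpow_add _ _ h0 htop, add_neg_cancel, ENNReal.rpow_zero, mul_one]
  have hpow : ∀ x, (F x * w x ^ (1 / p)) ^ p = F x ^ p * w x := fun x => by
    rw [ENNReal.mul_rpow_of_nonneg _ _ hpq.nonneg, ← ENNReal.rpow_mul,
      one_div_mul_cancel hpq.ne_zero, ENNReal.rpow_one]
  have hqow : ∀ x, (w x ^ (-(1 / p))) ^ q = w x ^ (1 - q) := fun x => by
    rw [← ENNReal.rpow_mul, neg_mul, one_div_mul_eq_div, hpq.symm.div_conj_eq_sub_one, neg_sub]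
  have hholder := ENNReal.lintegral_mul_le_Lp_mul_Lq μ hpq
    (f := fun x => F x * w x ^ (1 / p)) (g := fun x => w x ^ (-(1 / p))) (by fun_prop)
    (by fun_prop)
  simp only [Pi.mul_apply, hpow, hqow, ← lintegral_congr_ae hfac] at hholder
  calc (∫⁻ x, F x ∂μ) ^ p
      ≤ ((∫⁻ x, F x ^ p * w x ∂μ) ^ (1 / p) * (∫⁻ x, w x ^ (1 - q) ∂μ) ^ (1 / q)) ^ p :=
        ENNReal.rpow_le_rpow hholder hpq.nonneg
    _ = (∫⁻ x, w x ^ (1 - q) ∂μ) ^ (p - 1) * ∫⁻ x, F x ^ p * w x ∂μ := by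
        rw [ENNReal.mul_rpow_of_nonneg _ _ hpq.nonneg, ← ENNReal.rpow_mul, ← ENNReal.rpow_mul,
          one_div_mul_cancel hpq.ne_zero, ENNReal.rpow_one, one_div_mul_eq_div,
          hpq.div_conj_eq_sub_one, mul_comm]

theorem lintegral_mul_setLIntegral_Ioi_eq (μ ν : Measure ℝ) [SFinite μ] [SFinite ν]
    {C D : ℝ → ℝ≥0∞} (hC : Measurable C) (hD : Measurable D) :
    ∫⁻ s, C s * ∫⁻ t in Ioi s, D t ∂ν ∂μ = ∫⁻ t, D t * ∫⁻ s in Iio t, C s ∂μ ∂ν := by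
  set K := {x : ℝ × ℝ | x.1 < x.2}.indicator fun x => C x.1 * D x.2
  have hK : Measurable K := ((hC.comp measurable_fst).mul (hD.comp measurable_snd)).indicator
    (measurableSet_lt measurable_fst measurable_snd)
  have hKs : ∀ s t, K (s, t) = C s * (Ioi s).indicator D t := fun s t => by
    by_cases h : s < t <;> simp [K, indicator, h]
  have hKt : ∀ s t, K (s, t) = D t * (Iio t).indicator C s := fun s t => by
    by_cases h : s < t <;> simp [K, indicator, h, mul_comm]
  calc ∫⁻ s, C s * ∫⁻ t in Ioi s, D t ∂ν ∂μ = ∫⁻ s, ∫⁻ t, K (s, t) ∂ν ∂μ := by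
        simp_rw [hKs, lintegral_const_mul _ (hD.indicator measurableSet_Ioi),
          lintegral_indicator measurableSet_Ioi]
    _ = ∫⁻ t, ∫⁻ s, K (s, t) ∂μ ∂ν := lintegral_lintegral_swap hK.aemeasurable
    _ = ∫⁻ t, D t * ∫⁻ s in Iio t, C s ∂μ ∂ν := by
        simp_rw [hKt, lintegral_const_mul _ (hC.indicator measurableSet_Iio),
          lintegral_indicator measurableSet_Iio]

theorem ENNReal.le_mul_rpow_neg_of_rpow_mul_le {x y A : ℝ≥0∞} {a : ℝ} (ha : 0 < a)
    (hx : x ≠ 0) (hA : A ≠ ⊤) (h : x ^ a * y ≤ A) : y ≤ A * x ^ (-a) := by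
  rw [ENNReal.rpow_neg, ← div_eq_mul_inv, ENNReal.le_div_iff_mul_le
    (Or.inl (by simp [ENNReal.rpow_eq_zero_iff, hx, ha.le])) (Or.inr hA), mul_comm]
  exact h

theorem withDensity_Ioi_ne_zero {g : ℝ → ℝ≥0∞} (hg : Measurable g) {t : ℝ}
    (hg0 : ∀ᵐ x ∂volume.restrict (Ioi t), g x ≠ 0) : volume.withDensity g (Ioi t) ≠ 0 := by
  rw [withDensity_apply _ measurableSet_Ioi, Ne, lintegral_eq_zero_iff hg]
  intro h0
  have hfalse : ∀ᵐ x ∂volume.restrict (Ioi t), False := by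
    filter_upwards [h0, hg0] with x hx hx0
    exact hx0 hx
  exact (ae_restrict_neBot.2 (by simp)).ne (eventually_false_iff_eq_bot.1 hfalse)

theorem setLIntegral_Ioi_weight_rpow_one_sub_le {p q : ℝ} (hpq : p.HolderConjugate q)
    {v : ℝ → ℝ} (hv : Measurable v) {ν : Measure ℝ}
    (hν : ν = volume.withDensity fun t => ENNReal.ofReal (v t ^ (1 - q))) {s : ℝ}
    (hv0 : ∀ᵐ t ∂volume.restrict (Ioi s), 0 < v t) (hνs : ν (Ioi s) ≠ ⊤) :
    ∫⁻ t in Ioi s, (ENNReal.ofReal (v t) * ν (Ioi t) ^ (1 / q)) ^ (1 - q) ≤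
      ENNReal.ofReal q * ν (Ioi s) ^ (1 / q) := by
  subst hν
  set ν := volume.withDensity fun t => ENNReal.ofReal (v t ^ (1 - q))
  have hWm : Measurable fun t => ν (Ioi t) :=
    Antitone.measurable fun a b hab => measure_mono (Ioi_subset_Ioi hab)
  have h := setLIntegral_Ioi_measure_Ioi_rpow_neg_le ν hpq.one_div_pos
    ((div_lt_one hpq.pos).2 hpq.lt) s
  rw [hpq.one_sub_one_div, one_div_one_div, restrict_withDensity measurableSet_Ioi,
    lintegral_withDensity_eq_lintegral_mul _ (by fun_prop) (hWm.pow_const _)] at h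
  refine le_of_eq_of_le (lintegral_congr_ae ?_) h
  filter_upwards [hv0, ae_restrict_mem measurableSet_Ioi] with t hvt hst
  rw [ENNReal.mul_rpow_of_ne_top ENNReal.ofReal_ne_top (ENNReal.rpow_ne_top_of_nonneg
      hpq.symm.one_div_nonneg (ne_top_of_le_ne_top hνs (measure_mono (Ioi_subset_Ioi hst.le)))),
    ENNReal.ofReal_rpow_of_pos hvt, ← ENNReal.rpow_mul, one_div, mul_one_sub,
    inv_mul_cancel₀ hpq.symm.ne_zero, hpq.symm.inv_sub_one, one_div]
  rfl

theorem ofReal_abs_setIntegral_Ioi_rpow_le {p q : ℝ} (hpq : p.HolderConjugate q)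
    {v f : ℝ → ℝ} (hv : Measurable v) (hf : Measurable f) {ν : Measure ℝ}
    (hν : ν = volume.withDensity fun t => ENNReal.ofReal (v t ^ (1 - q))) {s : ℝ}
    (hv0 : ∀ᵐ t ∂volume.restrict (Ioi s), 0 < v t) (hνs : ν (Ioi s) ≠ ⊤) :
    ENNReal.ofReal |∫ t in Ioi s, f t| ^ p ≤ (ENNReal.ofReal q * ν (Ioi s) ^ (1 / q)) ^ (p - 1) *
      ∫⁻ t in Ioi s, ENNReal.ofReal (|f t| ^ p * v t) * ν (Ioi t) ^ (1 / q) := by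
  have hWm : Measurable fun t => ν (Ioi t) :=
    Antitone.measurable fun a b hab => measure_mono (Ioi_subset_Ioi hab)
  have hW0 : ∀ t, s < t → ν (Ioi t) ≠ 0 := fun t hst => by
    rw [hν]
    refine withDensity_Ioi_ne_zero (by fun_prop) ?_
    filter_upwards [ae_restrict_of_ae_restrict_of_subset (Ioi_subset_Ioi hst.le) hv0] with x hx
    exact (ENNReal.ofReal_pos.2 (Real.rpow_pos_of_pos hx _)).ne'
  have hWfin : ∀ t, s < t → ν (Ioi t) ≠ ⊤ := fun t hst =>
    ne_top_of_le_ne_top hνs (measure_mono (Ioi_subset_Ioi hst.le))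
  set w : ℝ → ℝ≥0∞ := fun t => ENNReal.ofReal (v t) * ν (Ioi t) ^ (1 / q)
  have hw0 : ∀ᵐ t ∂volume.restrict (Ioi s), w t ≠ 0 := by
    filter_upwards [hv0, ae_restrict_mem measurableSet_Ioi] with t hvt hst
    exact mul_ne_zero (ENNReal.ofReal_pos.2 hvt).ne'
      (ENNReal.rpow_pos (pos_iff_ne_zero.2 (hW0 t hst)) (hWfin t hst)).ne'
  have hwtop : ∀ᵐ t ∂volume.restrict (Ioi s), w t ≠ ⊤ := by
    filter_upwards [ae_restrict_mem measurableSet_Ioi] with t hst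
    exact ENNReal.mul_ne_top ENNReal.ofReal_ne_top
      (ENNReal.rpow_ne_top_of_nonneg hpq.symm.one_div_nonneg (hWfin t hst))
  have hFw : ∀ t, ENNReal.ofReal |f t| ^ p * w t =
      ENNReal.ofReal (|f t| ^ p * v t) * ν (Ioi t) ^ (1 / q) := fun t => by
    rw [ENNReal.ofReal_mul (by positivity), ENNReal.ofReal_rpow_of_nonneg (abs_nonneg _)
      hpq.nonneg, mul_assoc]
  calc ENNReal.ofReal |∫ t in Ioi s, f t| ^ p
      ≤ (∫⁻ t in Ioi s, ENNReal.ofReal |f t|) ^ p := by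
        refine ENNReal.rpow_le_rpow ?_ hpq.nonneg
        simpa only [← Real.enorm_eq_ofReal_abs] using enorm_integral_le_lintegral_enorm f
    _ ≤ (∫⁻ t in Ioi s, w t ^ (1 - q)) ^ (p - 1) *
          ∫⁻ t in Ioi s, ENNReal.ofReal |f t| ^ p * w t :=
        lintegral_rpow_le_weighted_Lp_mul_Lq _ hpq hf.abs.ennreal_ofReal.aemeasurable
          (hv.ennreal_ofReal.mul (hWm.pow_const _)).aemeasurable hw0 hwtop
    _ ≤ _ := by
        simp only [hFw]
        gcongr
        · exact hpq.sub_one_pos.le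
        · exact setLIntegral_Ioi_weight_rpow_one_sub_le hpq hv hν hv0 hνs

theorem ofReal_abs_setIntegral_Ioi_rpow_le_of_rpow_mul_le {p q : ℝ} (hpq : p.HolderConjugate q)
    {v f : ℝ → ℝ} (hv : Measurable v) (hf : Measurable f) {ν : Measure ℝ}
    (hν : ν = volume.withDensity fun t => ENNReal.ofReal (v t ^ (1 - q))) {s : ℝ}
    (hv0 : ∀ᵐ t ∂volume.restrict (Ioi s), 0 < v t) {x A : ℝ≥0∞} (hx : x ≠ 0) (hAfin : A ≠ ⊤)
    (hA : x ^ (1 / p) * ν (Ioi s) ^ (1 / q) ≤ A) :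
    ENNReal.ofReal |∫ t in Ioi s, f t| ^ p ≤ (ENNReal.ofReal q * A) ^ (p - 1) *
      (x ^ (-(1 / q)) * ∫⁻ t in Ioi s, ENNReal.ofReal (|f t| ^ p * v t) * ν (Ioi t) ^ (1 / q)) := by
  have hW := ENNReal.le_mul_rpow_neg_of_rpow_mul_le hpq.one_div_pos hx hAfin hA
  have hνs : ν (Ioi s) ≠ ⊤ := by
    refine (ENNReal.rpow_eq_top_iff_of_pos hpq.symm.one_div_pos).not.1
      (ne_top_of_le_ne_top (ENNReal.mul_ne_top hAfin ?_) hW)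
    simp [ENNReal.rpow_eq_top_iff, hx, hpq.pos.le]
  calc ENNReal.ofReal |∫ t in Ioi s, f t| ^ p
      ≤ (ENNReal.ofReal q * ν (Ioi s) ^ (1 / q)) ^ (p - 1) *
          ∫⁻ t in Ioi s, ENNReal.ofReal (|f t| ^ p * v t) * ν (Ioi t) ^ (1 / q) :=
        ofReal_abs_setIntegral_Ioi_rpow_le hpq hv hf hν hv0 hνs
    _ ≤ (ENNReal.ofReal q * (A * x ^ (-(1 / p)))) ^ (p - 1) *
          ∫⁻ t in Ioi s, ENNReal.ofReal (|f t| ^ p * v t) * ν (Ioi t) ^ (1 / q) := by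
        gcongr
        exact hpq.sub_one_pos.le
    _ = _ := by
        rw [← mul_assoc, ENNReal.mul_rpow_of_nonneg _ _ hpq.sub_one_pos.le, ← ENNReal.rpow_mul,
          neg_mul, one_div_mul_eq_div, sub_div, div_self hpq.ne_zero, hpq.one_sub_one_div,
          mul_assoc]

theorem mul_setLIntegral_Iio_measure_Iic_rpow_neg_le {p q : ℝ} (hpq : p.HolderConjugate q)
    (μ : Measure ℝ) [NullSingletonClass μ] {t : ℝ} {y A : ℝ≥0∞}
    (hA : μ (Iic t) ^ (1 / p) * y ≤ A) :
    y * ∫⁻ s in Iio t, μ (Iic s) ^ (-(1 / q)) ∂μ ≤ ENNReal.ofReal p * A := by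
  have h := setLIntegral_Iio_measure_Iic_rpow_neg_le μ hpq.symm.one_div_pos
    ((div_lt_one hpq.symm.pos).2 hpq.symm.lt) t
  rw [hpq.symm.one_sub_one_div, one_div_one_div] at h
  calc y * ∫⁻ s in Iio t, μ (Iic s) ^ (-(1 / q)) ∂μ
      ≤ y * (ENNReal.ofReal p * μ (Iic t) ^ (1 / p)) := by
        refine mul_le_mul_right (h.trans (mul_le_mul_right ?_ _)) _
        exact ENNReal.rpow_le_rpow (measure_mono Iio_subset_Iic_self) hpq.one_div_nonneg
    _ = ENNReal.ofReal p * (μ (Iic t) ^ (1 / p) * y) := by ring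
    _ ≤ ENNReal.ofReal p * A := mul_le_mul_right hA _

theorem lintegral_ofReal_abs_setIntegral_Ioi_rpow_le {p q : ℝ} (hpq : p.HolderConjugate q)
    {μ ν : Measure ℝ} [SFinite μ] [NullSingletonClass μ] (hμ : ∀ᵐ s ∂μ, 0 < s)
    {v f : ℝ → ℝ} (hv : Measurable v) (hf : Measurable f)
    (hν : ν = volume.withDensity fun t => ENNReal.ofReal (v t ^ (1 - q)))
    (hv0 : ∀ᵐ t ∂volume.restrict (Ioi 0), 0 < v t) {A : ℝ≥0∞} (hAfin : A ≠ ⊤)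
    (hA : ∀ t, 0 < t → μ (Iic t) ^ (1 / p) * ν (Ioi t) ^ (1 / q) ≤ A) :
    ∫⁻ s, ENNReal.ofReal |∫ t in Ioi s, f t| ^ p ∂μ ≤
      ENNReal.ofReal (p * q ^ (p - 1)) * A ^ p *
        ∫⁻ t in Ioi 0, ENNReal.ofReal (|f t| ^ p * v t) := by
  set G : ℝ → ℝ≥0∞ := fun t => ENNReal.ofReal (|f t| ^ p * v t)
  have hΦm : Measurable fun s => μ (Iic s) :=
    Monotone.measurable fun a b hab => measure_mono (Iic_subset_Iic.2 hab)
  have hWm : Measurable fun t => ν (Ioi t) :=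
    Antitone.measurable fun a b hab => measure_mono (Ioi_subset_Ioi hab)
  have hCA : (ENNReal.ofReal q * A) ^ (p - 1) ≠ ⊤ := ENNReal.rpow_ne_top_of_nonneg
    hpq.sub_one_pos.le (ENNReal.mul_ne_top ENNReal.ofReal_ne_top hAfin)
  have hΦ0 : ∀ᵐ s ∂μ, μ (Iic s) ≠ 0 := measure_eq_zero_iff_ae_notMem.1
    (measure_setOf_eq_zero_of_forall_measure_setOf_lt_le (measure_setOf_measure_Iic_lt_le μ))
  have hpt : ∀ᵐ s ∂μ, ENNReal.ofReal |∫ t in Ioi s, f t| ^ p ≤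
      (ENNReal.ofReal q * A) ^ (p - 1) * (μ (Iic s) ^ (-(1 / q)) *
        ∫⁻ t in Ioi s, G t * ν (Ioi t) ^ (1 / q) ∂volume.restrict (Ioi 0)) := by
    filter_upwards [hμ, hΦ0] with s hs hΦs
    rw [Measure.restrict_restrict measurableSet_Ioi, Ioi_inter_Ioi, sup_eq_left.2 hs.le]
    exact ofReal_abs_setIntegral_Ioi_rpow_le_of_rpow_mul_le hpq hv hf hν
      (ae_restrict_of_ae_restrict_of_subset (Ioi_subset_Ioi hs.le) hv0) hΦs hAfin (hA s hs)
  have hAp : A ^ p = A ^ (p - 1) * A := by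
    simpa using ENNReal.rpow_add_of_nonneg (x := A) (p - 1) 1 hpq.sub_one_pos.le zero_le_one
  calc ∫⁻ s, ENNReal.ofReal |∫ t in Ioi s, f t| ^ p ∂μ
      ≤ ∫⁻ s, (ENNReal.ofReal q * A) ^ (p - 1) * (μ (Iic s) ^ (-(1 / q)) *
          ∫⁻ t in Ioi s, G t * ν (Ioi t) ^ (1 / q) ∂volume.restrict (Ioi 0)) ∂μ :=
        lintegral_mono_ae hpt
    _ = (ENNReal.ofReal q * A) ^ (p - 1) * ∫⁻ t in Ioi 0,
          G t * (ν (Ioi t) ^ (1 / q) * ∫⁻ s in Iio t, μ (Iic s) ^ (-(1 / q)) ∂μ) := by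
        rw [lintegral_const_mul' _ _ hCA, lintegral_mul_setLIntegral_Ioi_eq μ _
          (D := fun t => G t * ν (Ioi t) ^ (1 / q)) (hΦm.pow_const _)
          ((by fun_prop : Measurable G).mul (hWm.pow_const _))]
        simp only [mul_assoc]
    _ ≤ (ENNReal.ofReal q * A) ^ (p - 1) * ∫⁻ t in Ioi 0, G t * (ENNReal.ofReal p * A) := by
        refine mul_le_mul_right (setLIntegral_mono' measurableSet_Ioi fun t ht => ?_) _
        exact mul_le_mul_right (mul_setLIntegral_Iio_measure_Iic_rpow_neg_le hpq μ (hA t ht)) _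
    _ = _ := by
        rw [lintegral_mul_const' _ _ (ENNReal.mul_ne_top ENNReal.ofReal_ne_top hAfin),
          ENNReal.mul_rpow_of_nonneg _ _ hpq.sub_one_pos.le, ENNReal.ofReal_mul hpq.nonneg,
          ENNReal.ofReal_rpow_of_nonneg hpq.symm.nonneg hpq.sub_one_pos.le, hAp]
        ring

theorem Real.HolderConjugate.ofReal_mul_rpow_mul_rpow_one_div {p q : ℝ}
    (hpq : p.HolderConjugate q) (A X : ℝ≥0∞) :
    (ENNReal.ofReal (p * q ^ (p - 1)) * A ^ p * X) ^ (1 / p) =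
      ENNReal.ofReal (p ^ (1 / p) * q ^ (1 / q)) * A * X ^ (1 / p) := by
  have hq0 := hpq.symm.nonneg
  rw [ENNReal.mul_rpow_of_nonneg _ _ hpq.one_div_nonneg,
    ENNReal.mul_rpow_of_nonneg _ _ hpq.one_div_nonneg, ← ENNReal.rpow_mul,
    mul_one_div_cancel hpq.ne_zero, ENNReal.rpow_one,
    ENNReal.ofReal_rpow_of_nonneg (mul_nonneg hpq.nonneg (Real.rpow_nonneg hq0 _))
      hpq.one_div_nonneg, Real.mul_rpow hpq.nonneg (Real.rpow_nonneg hq0 _),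
    ← Real.rpow_mul hq0, mul_one_div, sub_div, div_self hpq.ne_zero, hpq.one_sub_one_div]

theorem muckenhoupt_weighted_hardy_general (p p' : ℝ) (hp : 1 < p) (hp' : p' = p / (p - 1))
    (u v f : ℝ → ℝ) (hu : Measurable u) (hv : Measurable v) (hf : Measurable f)
    (hv0 : ∀ᵐ s ∂(volume.restrict (Ioi (0 : ℝ))), 0 < v s)
    (A : ℝ≥0∞)
    (hA : A = ⨆ t : {t : ℝ // 0 < t},
      (∫⁻ s in Ioc 0 (t : ℝ), ENNReal.ofReal (u s)) ^ (1 / p) *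
        (∫⁻ s in Ioi (t : ℝ), ENNReal.ofReal (v s ^ (1 - p'))) ^ (1 / p'))
    (hAfin : A ≠ ⊤) :
    (∫⁻ s in Ioi (0 : ℝ), ENNReal.ofReal (|∫ t in Ioi s, f t| ^ p * u s)) ^ (1 / p) ≤
      ENNReal.ofReal (p ^ (1 / p) * p' ^ (1 / p')) * A *
        (∫⁻ s in Ioi (0 : ℝ), ENNReal.ofReal (|f s| ^ p * v s)) ^ (1 / p) := by
  have hpq : p.HolderConjugate p' := (Real.holderConjugate_iff_eq_conjExponent hp).2 hp'
  set μ := (volume.restrict (Ioi 0)).withDensity fun s => ENNReal.ofReal (u s)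
  have hμ : ∀ᵐ s ∂μ, 0 < s :=
    (withDensity_absolutelyContinuous _ _).ae_le (ae_restrict_mem measurableSet_Ioi)
  have hAμ : ∀ t, 0 < t → μ (Iic t) ^ (1 / p) *
      (volume.withDensity fun s => ENNReal.ofReal (v s ^ (1 - p'))) (Ioi t) ^ (1 / p') ≤ A := by
    intro t ht
    rw [withDensity_apply _ measurableSet_Iic, Measure.restrict_restrict measurableSet_Iic,
      Iic_inter_Ioi, withDensity_apply _ measurableSet_Ioi, hA]
    exact le_iSup_of_le (⟨t, ht⟩ : {t : ℝ // 0 < t}) le_rfl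
  have hLHS : ∫⁻ s in Ioi 0, ENNReal.ofReal (|∫ t in Ioi s, f t| ^ p * u s) =
      ∫⁻ s, ENNReal.ofReal |∫ t in Ioi s, f t| ^ p ∂μ := by
    rw [lintegral_withDensity_eq_lintegral_mul_non_measurable _ hu.ennreal_ofReal
      (ae_of_all _ fun _ => ENNReal.ofReal_lt_top)]
    refine lintegral_congr fun s => ?_
    rw [Pi.mul_apply, ENNReal.ofReal_mul (by positivity),
      ENNReal.ofReal_rpow_of_nonneg (abs_nonneg _) hpq.nonneg, mul_comm]
  rw [hLHS, ← hpq.ofReal_mul_rpow_mul_rpow_one_div]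
  exact ENNReal.rpow_le_rpow
    (lintegral_ofReal_abs_setIntegral_Ioi_rpow_le hpq hμ hv hf rfl hv0 hAfin hAμ)
    hpq.one_div_nonneg

theorem muckenhoupt_weighted_hardy (p p' : ℝ) (hp : 1 < p) (hp' : p' = p / (p - 1))
    (u v f : ℝ → ℝ) (hu : Measurable u) (hv : Measurable v) (hf : Measurable f)
    (hu0 : ∀ s, 0 < s → 0 ≤ u s)
    (hv0 : ∀ᵐ s ∂(volume.restrict (Ioi (0 : ℝ))), 0 < v s)
    (A : ℝ≥0∞)
    (hA : A = ⨆ t : {t : ℝ // 0 < t},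
      (∫⁻ s in Ioc 0 (t : ℝ), ENNReal.ofReal (u s)) ^ (1 / p) *
        (∫⁻ s in Ioi (t : ℝ), ENNReal.ofReal (v s ^ (1 - p'))) ^ (1 / p'))
    (hAfin : A ≠ ⊤) :
    (∫⁻ s in Ioi (0 : ℝ), ENNReal.ofReal (|∫ t in Ioi s, f t| ^ p * u s)) ^ (1 / p) ≤
      ENNReal.ofReal (p ^ (1 / p) * p' ^ (1 / p')) * A *
        (∫⁻ s in Ioi (0 : ℝ), ENNReal.ofReal (|f s| ^ p * v s)) ^ (1 / p) :=
  muckenhoupt_weighted_hardy_general p p' hp hp' u v f hu hv hf hv0 A hA hAfin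
end

section
/- Let $N > p > 1$ and let $\psi : (0,\infty) \to [0,\infty)$ be a nonincreasing measurable function with $\psi(s) \to 0$ as $s \to \infty$, which is locally absolutely continuous. Then $\int_0^\infty s^{-p/N} \psi(s)^p \, ds \leq p \left( \frac{N(p-1)p'}{N-p} \right)^{p-1} \cdot \frac{N}{N-p} \int_0^\infty s^{p - p/N} |\psi'(s)|^p \, ds$, where $p' = p/(p-1)$. -/
/-!
Since `ψ` vanishes at infinity, `|ψ s| ≤ ∫_s^∞ |ψ'|`, so the claim is the dual Hardy inequality
`∫_0^∞ s^a (∫_s^∞ G)^p ≤ (p/(a+1))^p ∫_0^∞ t^(a+p) G^p` with `a = -p/N` and `G = |ψ'|`; the stated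
constant equals `(pN/(N-p))^p`. For the Hardy inequality, Hölder's inequality on `(s, ∞)` with the
weights `t^(±β)`, `β = (1+δ)/p'`, `δ = (a+1)/p`, gives
`(∫_s^∞ G)^p ≤ (s^(-δ)/δ)^(p-1) ∫_s^∞ t^(βp) G^p`; integrating against `s^a` and exchanging the
order of integration leaves `∫_0^t s^(δ-1) ds = t^δ/δ`.
-/

open MeasureTheory Set Filter
open scoped ENNReal Topology

lemma lintegral_Ioi_rpow_of_lt {a c : ℝ} (ha : a < -1) (hc : 0 < c) :
    ∫⁻ t in Ioi c, ENNReal.ofReal (t ^ a) = ENNReal.ofReal (-c ^ (a + 1) / (a + 1)) := by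
  rw [← integral_Ioi_rpow_of_lt ha hc, ofReal_integral_eq_lintegral_ofReal
    (integrableOn_Ioi_rpow_of_lt ha hc)]
  filter_upwards [self_mem_ae_restrict measurableSet_Ioi] with t ht
  exact Real.rpow_nonneg (hc.trans ht).le a

lemma lintegral_Ioo_zero_rpow {a t : ℝ} (ha : -1 < a) (ht : 0 < t) :
    ∫⁻ s in Ioo 0 t, ENNReal.ofReal (s ^ a) = ENNReal.ofReal (t ^ (a + 1) / (a + 1)) := by
  have hint : IntegrableOn (fun s : ℝ => s ^ a) (Ioc 0 t) :=
    (intervalIntegrable_iff_integrableOn_Ioc_of_le ht.le).1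
      (intervalIntegral.intervalIntegrable_rpow' ha)
  rw [setLIntegral_congr Ioo_ae_eq_Ioc, ← ofReal_integral_eq_lintegral_ofReal hint,
    ← intervalIntegral.integral_of_le ht.le, integral_rpow (Or.inl ha),
    Real.zero_rpow (by linarith), sub_zero]
  filter_upwards [self_mem_ae_restrict measurableSet_Ioc] with s hs
  exact Real.rpow_nonneg hs.1.le a

lemma enorm_le_lintegral_Ioi_enorm {f g : ℝ → ℝ} {s : ℝ} (hf : Tendsto f atTop (𝓝 0))
    (hfg : ∀ b, s ≤ b → f b - f s = ∫ t in s..b, g t) :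
    ‖f s‖ₑ ≤ ∫⁻ t in Ioi s, ‖g t‖ₑ := by
  have hbound : ∀ b, s ≤ b → ‖f s‖ₑ ≤ ‖f b‖ₑ + ∫⁻ t in Ioi s, ‖g t‖ₑ := fun b hb =>
    calc ‖f s‖ₑ = ‖f b - ∫ t in Ioc s b, g t‖ₑ := by
          rw [← intervalIntegral.integral_of_le hb, ← hfg b hb, sub_sub_cancel]
      _ ≤ ‖f b‖ₑ + ∫⁻ t in Ioc s b, ‖g t‖ₑ :=
          enorm_sub_le.trans (add_le_add_right (enorm_integral_le_lintegral_enorm _) _)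
      _ ≤ ‖f b‖ₑ + ∫⁻ t in Ioi s, ‖g t‖ₑ := by gcongr; exact Ioc_subset_Ioi_self
  have hlim : Tendsto (fun b => ‖f b‖ₑ + ∫⁻ t in Ioi s, ‖g t‖ₑ) atTop
      (𝓝 (0 + ∫⁻ t in Ioi s, ‖g t‖ₑ)) := by
    refine Tendsto.add ?_ tendsto_const_nhds
    simpa using hf.enorm
  rw [zero_add] at hlim
  exact ge_of_tendsto hlim (eventually_atTop.2 ⟨s, hbound⟩)

lemma ENNReal.ofReal_rpow_le_enorm_rpow {x p : ℝ} (hp : 0 ≤ p) :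
    ENNReal.ofReal (x ^ p) ≤ ‖x‖ₑ ^ p := by
  rw [Real.enorm_eq_ofReal_abs, ENNReal.ofReal_rpow_of_nonneg (abs_nonneg x) hp]
  exact ENNReal.ofReal_le_ofReal ((le_abs_self _).trans (Real.abs_rpow_le_abs_rpow x p))

lemma lintegral_Ioi_rpow_le_weighted {G : ℝ → ℝ≥0∞} {p δ s : ℝ} (hG : Measurable G)
    (hp : 1 < p) (hδ : 0 < δ) (hs : 0 < s) :
    (∫⁻ t in Ioi s, G t) ^ p ≤ ENNReal.ofReal (s ^ (-δ) / δ) ^ (p - 1) *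
      ∫⁻ t in Ioi s, ENNReal.ofReal (t ^ ((1 + δ) * (p - 1))) * G t ^ p := by
  set q := p.conjExponent
  have hpq : p.HolderConjugate q := .conjExponent hp
  set β := (1 + δ) / q
  have hweight : ∀ t ∈ Ioi s, (G t * ENNReal.ofReal (t ^ β)) * ENNReal.ofReal (t ^ (-β)) = G t := by
    intro t ht
    rw [mul_assoc, ← ENNReal.ofReal_mul (Real.rpow_nonneg (hs.trans ht).le β),
      ← Real.rpow_add (hs.trans ht), add_neg_cancel, Real.rpow_zero, ENNReal.ofReal_one, mul_one]
  have hfirst : ∀ t ∈ Ioi s, (G t * ENNReal.ofReal (t ^ β)) ^ p =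
      ENNReal.ofReal (t ^ ((1 + δ) * (p - 1))) * G t ^ p := by
    intro t ht
    rw [ENNReal.mul_rpow_of_nonneg _ _ hpq.nonneg, ENNReal.ofReal_rpow_of_nonneg
      (Real.rpow_nonneg (hs.trans ht).le β) hpq.nonneg, ← Real.rpow_mul (hs.trans ht).le, mul_comm]
    congr 3
    simp only [β, q, Real.conjExponent]
    field_simp [(sub_pos.2 hp).ne']
  have hsecond : ∫⁻ t in Ioi s, ENNReal.ofReal (t ^ (-β)) ^ q = ENNReal.ofReal (s ^ (-δ) / δ) := by
    rw [setLIntegral_congr_fun measurableSet_Ioi (g := fun t => ENNReal.ofReal (t ^ (-(1 + δ))))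
      fun t ht => ?_, lintegral_Ioi_rpow_of_lt (by linarith) hs]
    · congr 1
      rw [show -(1 + δ) + 1 = -δ by ring, neg_div_neg_eq]
    · rw [ENNReal.ofReal_rpow_of_nonneg (Real.rpow_nonneg (hs.trans ht).le _) hpq.symm.nonneg,
        ← Real.rpow_mul (hs.trans ht).le, neg_mul, div_mul_cancel₀ _ hpq.symm.ne_zero]
  have hholder := ENNReal.lintegral_mul_le_Lp_mul_Lq (volume.restrict (Ioi s)) hpq
    (hG.mul (by fun_prop : Measurable fun t : ℝ => ENNReal.ofReal (t ^ β))).aemeasurable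
    (by fun_prop : Measurable fun t : ℝ => ENNReal.ofReal (t ^ (-β))).aemeasurable
  simp only [Pi.mul_apply] at hholder
  rw [setLIntegral_congr_fun measurableSet_Ioi hweight,
    setLIntegral_congr_fun measurableSet_Ioi hfirst, hsecond] at hholder
  calc (∫⁻ t in Ioi s, G t) ^ p
      ≤ ((∫⁻ t in Ioi s, ENNReal.ofReal (t ^ ((1 + δ) * (p - 1))) * G t ^ p) ^ (1 / p) *
          ENNReal.ofReal (s ^ (-δ) / δ) ^ (1 / q)) ^ p := ENNReal.rpow_le_rpow hholder hpq.nonneg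
    _ = _ := by
      rw [ENNReal.mul_rpow_of_nonneg _ _ hpq.nonneg, ← ENNReal.rpow_mul, ← ENNReal.rpow_mul,
        one_div_mul_cancel hpq.ne_zero, ENNReal.rpow_one, mul_comm]
      congr 2
      simp only [q, Real.conjExponent]
      field_simp [(sub_pos.2 hp).ne']

lemma lintegral_mul_lintegral_Ioi_eq {w K : ℝ → ℝ≥0∞} (hw : Measurable w) (hK : Measurable K) :
    ∫⁻ s in Ioi 0, w s * ∫⁻ t in Ioi s, K t =
      ∫⁻ t in Ioi 0, (∫⁻ s in Ioo 0 t, w s) * K t := by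
  let F : ℝ → ℝ → ℝ≥0∞ := fun s t =>
    {q : ℝ × ℝ | q.1 < q.2}.indicator (fun q => w q.1 * K q.2) (s, t)
  have hF : Measurable (Function.uncurry F) :=
    ((hw.comp measurable_fst).mul (hK.comp measurable_snd)).indicator
      (measurableSet_lt measurable_fst measurable_snd)
  have hlhs : ∀ s ∈ Ioi (0 : ℝ), w s * ∫⁻ t in Ioi s, K t = ∫⁻ t in Ioi 0, F s t := by
    intro s (hs : 0 < s)
    have : ∀ t, F s t = (Ioi s).indicator (fun t => w s * K t) t := fun t => rfl
    simp_rw [this, lintegral_indicator measurableSet_Ioi,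
      Measure.restrict_restrict measurableSet_Ioi, Ioi_inter_Ioi, sup_of_le_left hs.le,
      lintegral_const_mul _ hK]
  have hrhs : ∀ t ∈ Ioi (0 : ℝ), (∫⁻ s in Ioo 0 t, w s) * K t = ∫⁻ s in Ioi 0, F s t := by
    intro t _
    have : ∀ s, F s t = (Iio t).indicator (fun s => w s * K t) s := fun s => rfl
    simp_rw [this, lintegral_indicator measurableSet_Iio,
      Measure.restrict_restrict measurableSet_Iio, Iio_inter_Ioi, lintegral_mul_const _ hw]
  rw [setLIntegral_congr_fun measurableSet_Ioi hlhs, setLIntegral_congr_fun measurableSet_Ioi hrhs]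
  exact lintegral_lintegral_swap hF.aemeasurable

theorem hardy_lintegral_tail_le {G : ℝ → ℝ≥0∞} {p a : ℝ} (hG : Measurable G) (hp : 1 < p)
    (ha : -1 < a) :
    ∫⁻ s in Ioi 0, ENNReal.ofReal (s ^ a) * (∫⁻ t in Ioi s, G t) ^ p ≤
      ENNReal.ofReal ((p / (a + 1)) ^ p) *
        ∫⁻ t in Ioi 0, ENNReal.ofReal (t ^ (a + p)) * G t ^ p := by
  set δ := (a + 1) / p
  have hδ : 0 < δ := div_pos (by linarith) (by linarith)
  set K : ℝ → ℝ≥0∞ := fun t => ENNReal.ofReal (t ^ ((1 + δ) * (p - 1))) * G t ^ p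
  have hK : Measurable K := by fun_prop
  have hpointwise : ∀ s ∈ Ioi (0 : ℝ), ENNReal.ofReal (s ^ a) * (∫⁻ t in Ioi s, G t) ^ p ≤
      ENNReal.ofReal (δ ^ (-(p - 1))) * (ENNReal.ofReal (s ^ (δ - 1)) * ∫⁻ t in Ioi s, K t) := by
    intro s (hs : 0 < s)
    calc ENNReal.ofReal (s ^ a) * (∫⁻ t in Ioi s, G t) ^ p
        ≤ ENNReal.ofReal (s ^ a) *
            (ENNReal.ofReal (s ^ (-δ) / δ) ^ (p - 1) * ∫⁻ t in Ioi s, K t) := by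
          gcongr; exact lintegral_Ioi_rpow_le_weighted hG hp hδ hs
      _ = _ := by
        rw [← mul_assoc, ← mul_assoc, ENNReal.ofReal_rpow_of_nonneg (by positivity) (by linarith),
          ← ENNReal.ofReal_mul (by positivity), ← ENNReal.ofReal_mul (by positivity)]
        congr 2
        rw [Real.div_rpow (by positivity) hδ.le, ← Real.rpow_mul hs.le, div_eq_mul_inv,
          ← Real.rpow_neg hδ.le, ← mul_assoc, ← Real.rpow_add hs, mul_comm]
        congr 2
        simp only [δ]; field_simp; ring
  have hinner : ∀ t ∈ Ioi (0 : ℝ), (∫⁻ s in Ioo 0 t, ENNReal.ofReal (s ^ (δ - 1))) * K t =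
      ENNReal.ofReal δ⁻¹ * (ENNReal.ofReal (t ^ (a + p)) * G t ^ p) := by
    intro t (ht : 0 < t)
    rw [lintegral_Ioo_zero_rpow (by linarith) ht, sub_add_cancel, ← mul_assoc, ← mul_assoc,
      ← ENNReal.ofReal_mul (by positivity), ← ENNReal.ofReal_mul (by positivity)]
    congr 2
    rw [div_mul_eq_mul_div, ← Real.rpow_add ht, div_eq_inv_mul]
    congr 2
    simp only [δ]; field_simp; ring
  calc ∫⁻ s in Ioi 0, ENNReal.ofReal (s ^ a) * (∫⁻ t in Ioi s, G t) ^ p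
      ≤ ∫⁻ s in Ioi 0, ENNReal.ofReal (δ ^ (-(p - 1))) *
          (ENNReal.ofReal (s ^ (δ - 1)) * ∫⁻ t in Ioi s, K t) :=
        setLIntegral_mono' measurableSet_Ioi hpointwise
    _ = ENNReal.ofReal (δ ^ (-(p - 1))) * ∫⁻ t in Ioi 0, ENNReal.ofReal δ⁻¹ *
          (ENNReal.ofReal (t ^ (a + p)) * G t ^ p) := by
      rw [lintegral_const_mul' _ _ ENNReal.ofReal_ne_top,
        lintegral_mul_lintegral_Ioi_eq (by fun_prop) hK,
        setLIntegral_congr_fun measurableSet_Ioi hinner]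
    _ = _ := by
      rw [lintegral_const_mul' _ _ ENNReal.ofReal_ne_top, ← mul_assoc,
        ← ENNReal.ofReal_mul (by positivity), ← Real.rpow_neg_one, ← Real.rpow_add hδ,
        show -(p - 1) + -1 = -p by ring, Real.rpow_neg hδ.le, ← Real.inv_rpow hδ.le, inv_div]

lemma lorentz_hardy_constant_eq {p N : ℝ} (hp : 1 < p) (hpN : p < N) :
    (p / (-(p / N) + 1)) ^ p =
      p * (N * (p - 1) * (p / (p - 1)) / (N - p)) ^ (p - 1) * (N / (N - p)) := by
  have hN : 0 < N := by linarith
  have hNp : N - p ≠ 0 := by linarith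
  have hX : N * (p - 1) * (p / (p - 1)) / (N - p) = p * N / (N - p) := by
    field_simp [(by linarith : p - 1 ≠ 0)]
  have hX' : p / (-(p / N) + 1) = p * N / (N - p) := by
    rw [neg_add_eq_sub, one_sub_div hN.ne', div_div_eq_mul_div]
  have hX0 : p * N / (N - p) ≠ 0 := by positivity
  rw [hX, hX', Real.rpow_sub_one hX0]
  field_simp

theorem rearranged_lorentz_hardy_general (p N p' : ℝ) (hp : 1 < p) (hpN : p < N)
    (hp' : p' = p / (p - 1)) (ψ : ℝ → ℝ)
    (hlim : Tendsto ψ atTop (nhds 0))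
    (hAC : ∀ a b : ℝ, 0 < a → a ≤ b → ψ b - ψ a = ∫ t in a..b, deriv ψ t) :
    ∫⁻ s in Ioi (0 : ℝ), ENNReal.ofReal (s ^ (-(p / N)) * ψ s ^ p) ≤
      ENNReal.ofReal (p * (N * (p - 1) * p' / (N - p)) ^ (p - 1) * (N / (N - p))) *
        ∫⁻ s in Ioi (0 : ℝ), ENNReal.ofReal (s ^ (p - p / N) * |deriv ψ s| ^ p) := by
  have hN : 0 < N := by linarith
  have hexp : -1 < -(p / N) := by rw [neg_lt_neg_iff, div_lt_one hN]; exact hpN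
  have hψ : ∀ s ∈ Ioi (0 : ℝ), ENNReal.ofReal (s ^ (-(p / N)) * ψ s ^ p) ≤
      ENNReal.ofReal (s ^ (-(p / N))) * (∫⁻ t in Ioi s, ‖deriv ψ t‖ₑ) ^ p := fun s hs => by
    rw [ENNReal.ofReal_mul (Real.rpow_nonneg (mem_Ioi.1 hs).le _)]
    gcongr
    exact (ENNReal.ofReal_rpow_le_enorm_rpow (by linarith)).trans <| by
      gcongr; exact enorm_le_lintegral_Ioi_enorm hlim fun b hb => hAC s b hs hb
  calc ∫⁻ s in Ioi (0 : ℝ), ENNReal.ofReal (s ^ (-(p / N)) * ψ s ^ p)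
      ≤ ∫⁻ s in Ioi (0 : ℝ), ENNReal.ofReal (s ^ (-(p / N))) * (∫⁻ t in Ioi s, ‖deriv ψ t‖ₑ) ^ p :=
        setLIntegral_mono' measurableSet_Ioi hψ
    _ ≤ ENNReal.ofReal ((p / (-(p / N) + 1)) ^ p) *
          ∫⁻ t in Ioi 0, ENNReal.ofReal (t ^ (-(p / N) + p)) * ‖deriv ψ t‖ₑ ^ p :=
        hardy_lintegral_tail_le (measurable_deriv ψ).enorm hp hexp
    _ = _ := by
      rw [hp', lorentz_hardy_constant_eq hp hpN]
      congr 1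
      refine setLIntegral_congr_fun measurableSet_Ioi fun t (ht : 0 < t) => ?_
      rw [Real.enorm_eq_ofReal_abs, ENNReal.ofReal_rpow_of_nonneg (abs_nonneg _) (by linarith),
        ← ENNReal.ofReal_mul (Real.rpow_nonneg ht.le _), neg_add_eq_sub]

theorem rearranged_lorentz_hardy (p N p' : ℝ) (hp : 1 < p) (hpN : p < N)
    (hp' : p' = p / (p - 1)) (ψ : ℝ → ℝ)
    (hmono : AntitoneOn ψ (Ioi 0)) (hpos : ∀ s, 0 < s → 0 ≤ ψ s)
    (hmeas : Measurable ψ)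
    (hlim : Tendsto ψ atTop (nhds 0))
    (hAC : ∀ a b : ℝ, 0 < a → a ≤ b → ψ b - ψ a = ∫ t in a..b, deriv ψ t) :
    ∫⁻ s in Ioi (0 : ℝ), ENNReal.ofReal (s ^ (-(p / N)) * ψ s ^ p) ≤
      ENNReal.ofReal (p * (N * (p - 1) * p' / (N - p)) ^ (p - 1) * (N / (N - p))) *
        ∫⁻ s in Ioi (0 : ℝ), ENNReal.ofReal (s ^ (p - p / N) * |deriv ψ s| ^ p) :=
  rearranged_lorentz_hardy_general p N p' hp hpN hp' ψ hlim hAC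
end

section
/- Let $N \geq 2$, $p = N$, and let $g : (1,\infty) \to [0,\infty)$ satisfy $\int_1^\infty g(r) (r(1+\log r))^{N-1}\,dr < \infty$. Then there exists a constant $C = C(N) > 0$ such that for every $\phi \in W^{1,N}(B_1^c)$, $\int_{B_1^c} g(|x|) |\phi(x)|^N \, dx \leq C \left( \int_1^\infty g(r)(r(1+\log r))^{N-1}\,dr \right) \|\phi\|_{W^{1,N}(B_1^c)}^N$. -/
/-!
In polar coordinates `x = r • ω` the estimate splits into one estimate per ray. Along a ray, the
fundamental theorem of calculus and Hölder's inequality against the weight `t ^ (N - 1)` give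
`|φ (r ω)| ^ N ≤ 2 ^ (N - 1) (|φ ω| ^ N + (log r) ^ (N - 1) ∫₁^r t ^ (N - 1) |∇φ (t ω)| ^ N dt)`,
and averaging the same inequality over `r ∈ (1, 2]` bounds the trace `|φ ω| ^ N` by the
`W^{1,N}` energy of the ray. So `|φ (r ω)| ^ N ≲ (1 + log r) ^ (N - 1)` times that energy;
integrating against `g r * r ^ (N - 1) dr` and then over the sphere gives the theorem.
-/

open MeasureTheory Set Metric
open scoped ENNReal

section Polar

variable {E : Type*} [NormedAddCommGroup E] [NormedSpace ℝ E] [FiniteDimensional ℝ E]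
  [MeasurableSpace E] [BorelSpace E] (μ : Measure E) [μ.IsAddHaarMeasure]

theorem lintegral_compl_zero_eq_lintegral_sphere {f : E → ℝ≥0∞} (hf : Measurable f) :
    ∫⁻ x in {0}ᶜ, f x ∂μ = ∫⁻ ω : sphere (0 : E) 1, (∫⁻ r in Ioi (0 : ℝ),
      ENNReal.ofReal r ^ (Module.finrank ℝ E - 1) * f (r • (ω : E))) ∂μ.toSphere := by
  have hF : Measurable fun p : sphere (0 : E) 1 × Ioi (0 : ℝ) => f ((p.2 : ℝ) • (p.1 : E)) :=
    hf.comp (by fun_prop)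
  calc ∫⁻ x in {0}ᶜ, f x ∂μ = ∫⁻ x : ({0}ᶜ : Set E), f x ∂μ.comap (↑) :=
        (lintegral_subtype_comap (measurableSet_singleton _).compl _).symm
    _ = ∫⁻ p, f ((p.2 : ℝ) • (p.1 : E))
          ∂μ.toSphere.prod (.volumeIoiPow (Module.finrank ℝ E - 1)) := by
        rw [← (μ.measurePreserving_homeomorphUnitSphereProd).lintegral_comp_emb
          (Homeomorph.measurableEmbedding _)]
        congr with x
        have hx : ‖(x : E)‖ ≠ 0 := norm_ne_zero_iff.2 x.2
        simp [smul_smul, mul_inv_cancel₀ hx]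
    _ = ∫⁻ ω, (∫⁻ r, f ((r : ℝ) • (ω : E)) ∂.volumeIoiPow (Module.finrank ℝ E - 1))
          ∂μ.toSphere := lintegral_prod _ hF.aemeasurable
    _ = _ := by
        congr with ω
        rw [Measure.volumeIoiPow, lintegral_withDensity_eq_lintegral_mul _ (by fun_prop)
          (show Measurable fun r : Ioi (0 : ℝ) => f ((r : ℝ) • (ω : E)) from hf.comp (by fun_prop)),
          Pi.mul_def, lintegral_subtype_comap measurableSet_Ioi
          (fun r : ℝ => ENNReal.ofReal (r ^ _) * f (r • (ω : E)))]
        refine setLIntegral_congr_fun measurableSet_Ioi fun r hr => ?_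
        rw [ENNReal.ofReal_pow (le_of_lt hr)]

theorem lintegral_lt_norm_eq_lintegral_sphere {f : E → ℝ≥0∞} (hf : Measurable f) {a : ℝ}
    (ha : 0 ≤ a) :
    ∫⁻ x in {x | a < ‖x‖}, f x ∂μ = ∫⁻ ω : sphere (0 : E) 1, (∫⁻ r in Ioi a,
      ENNReal.ofReal r ^ (Module.finrank ℝ E - 1) * f (r • (ω : E))) ∂μ.toSphere := by
  have hS : MeasurableSet {x : E | a < ‖x‖} := measurableSet_lt measurable_const measurable_norm
  have hsub : {x : E | a < ‖x‖} ⊆ {0}ᶜ := fun x hx h0 => by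
    simp only [mem_ofPred_eq, mem_singleton_iff.1 h0, norm_zero] at hx
    linarith
  rw [← inter_eq_left.2 hsub, ← Measure.restrict_restrict hS, ← lintegral_indicator hS,
    lintegral_compl_zero_eq_lintegral_sphere μ (hf.indicator hS)]
  congr with ω
  rw [← lintegral_indicator measurableSet_Ioi, ← lintegral_indicator measurableSet_Ioi]
  congr with r
  simp only [indicator_apply, mem_Ioi, mem_ofPred_eq, norm_smul, norm_eq_of_mem_sphere ω, mul_one,
    Real.norm_eq_abs]
  split_ifs <;> grind

end Polar

theorem ENNReal.add_pow_le (a b : ℝ≥0∞) (n : ℕ) : (a + b) ^ n ≤ 2 ^ (n - 1) * (a ^ n + b ^ n) := by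
  rcases Nat.eq_zero_or_pos n with rfl | hn
  · norm_num
  · have h := ENNReal.rpow_add_le_mul_rpow_add_rpow a b (p := n) (by exact_mod_cast hn)
    rw [← Nat.cast_pred hn] at h
    simpa only [ENNReal.rpow_natCast] using h

theorem ofReal_setIntegral_mul_eq_setLIntegral {α : Type*} [MeasurableSpace α] {μ : Measure α}
    {s : Set α} (hs : MeasurableSet s) {f g : α → ℝ} (hf : ∀ x ∈ s, 0 ≤ f x)
    (hg : ∀ x ∈ s, 0 ≤ g x) (hfg : IntegrableOn (fun x => f x * g x) s μ) :
    ENNReal.ofReal (∫ x in s, f x * g x ∂μ) =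
      ∫⁻ x in s, ENNReal.ofReal (f x) * ENNReal.ofReal (g x) ∂μ := by
  rw [ofReal_integral_eq_lintegral_ofReal hfg]
  · exact setLIntegral_congr_fun hs fun x hx => ENNReal.ofReal_mul (hf x hx)
  · filter_upwards [ae_restrict_mem hs] with x hx
    exact mul_nonneg (hf x hx) (hg x hx)

theorem setLIntegral_Ioc_one_inv_eq_log {r : ℝ} (hr : 1 ≤ r) :
    ∫⁻ t in Ioc 1 r, (ENNReal.ofReal t)⁻¹ = ENNReal.ofReal (Real.log r) := by
  have hinv : IntegrableOn (fun t : ℝ => t⁻¹) (Ioc 1 r) :=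
    ((continuousOn_inv₀.mono fun t (ht : t ∈ Icc 1 r) => (zero_lt_one.trans_le ht.1).ne')
      |>.integrableOn_Icc).mono_set Ioc_subset_Icc_self
  have hlog : Real.log r = ∫ t in (1 : ℝ)..r, t⁻¹ := by
    rw [integral_inv_of_pos one_pos (by linarith), div_one]
  rw [hlog, intervalIntegral.integral_of_le hr, ofReal_integral_eq_lintegral_ofReal hinv]
  · refine setLIntegral_congr_fun measurableSet_Ioc fun t ht => ?_
    rw [ENNReal.ofReal_inv_of_pos (by linarith [ht.1])]
  · filter_upwards [ae_restrict_mem measurableSet_Ioc] with t ht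
    exact inv_nonneg.2 (by linarith [ht.1])

theorem setLIntegral_Ioc_one_pow_le {N : ℕ} (hN : 1 ≤ N) {r : ℝ} (hr : 1 ≤ r) {u : ℝ → ℝ≥0∞}
    (hu : Measurable u) :
    (∫⁻ t in Ioc 1 r, u t) ^ N ≤
      ENNReal.ofReal (Real.log r) ^ (N - 1) *
        ∫⁻ t in Ioc 1 r, ENNReal.ofReal t ^ (N - 1) * u t ^ N := by
  have hN0 : (N : ℝ) ≠ 0 := by positivity
  set p : ℝ := ((N - 1 : ℕ) : ℝ) / N
  set q : ℝ := 1 / N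
  have hpq : p + q = 1 := by rw [← add_div, Nat.cast_pred hN, sub_add_cancel, div_self hN0]
  have hp : ∀ A : ℝ≥0∞, (A ^ (N - 1)) ^ q = A ^ p := fun A => by
    rw [← ENNReal.rpow_natCast, ← ENNReal.rpow_mul, mul_one_div]
  have hq : ∀ A : ℝ≥0∞, (A ^ N) ^ q = A := fun A => by
    rw [← ENNReal.rpow_natCast, ← ENNReal.rpow_mul, mul_one_div_cancel hN0, ENNReal.rpow_one]
  have hpN : ∀ A : ℝ≥0∞, (A ^ p) ^ N = A ^ (N - 1) := fun A => by
    rw [← ENNReal.rpow_natCast, ← ENNReal.rpow_mul, div_mul_cancel₀ _ hN0, ENNReal.rpow_natCast]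
  have hqN : ∀ A : ℝ≥0∞, (A ^ q) ^ N = A := fun A => by
    rw [← ENNReal.rpow_natCast, ← ENNReal.rpow_mul, one_div_mul_cancel hN0, ENNReal.rpow_one]
  have hsplit : ∀ t ∈ Ioc (1 : ℝ) r,
      (ENNReal.ofReal t)⁻¹ ^ p * (ENNReal.ofReal t ^ (N - 1) * u t ^ N) ^ q = u t := by
    intro t ht
    have ht0 : 0 < ENNReal.ofReal t := ENNReal.ofReal_pos.2 (by linarith [ht.1])
    rw [ENNReal.mul_rpow_of_nonneg _ _ (by positivity), hp, hq, ENNReal.inv_rpow, ← mul_assoc,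
      ENNReal.inv_mul_cancel (ENNReal.rpow_pos ht0 ENNReal.ofReal_ne_top).ne'
        (ENNReal.rpow_ne_top_of_nonneg (by positivity) ENNReal.ofReal_ne_top), one_mul]
  -- Hölder's inequality with exponents `N / (N - 1)` and `N`
  have holder := ENNReal.lintegral_mul_norm_pow_le (μ := volume.restrict (Ioc 1 r))
    (f := fun t => (ENNReal.ofReal t)⁻¹) (g := fun t => ENNReal.ofReal t ^ (N - 1) * u t ^ N)
    (by fun_prop) (by fun_prop) (by positivity) (by positivity) hpq
  calc (∫⁻ t in Ioc 1 r, u t) ^ N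
      = (∫⁻ t in Ioc 1 r, (ENNReal.ofReal t)⁻¹ ^ p *
          (ENNReal.ofReal t ^ (N - 1) * u t ^ N) ^ q) ^ N := by
        rw [setLIntegral_congr_fun measurableSet_Ioc hsplit]
    _ ≤ ((∫⁻ t in Ioc 1 r, (ENNReal.ofReal t)⁻¹) ^ p *
          (∫⁻ t in Ioc 1 r, ENNReal.ofReal t ^ (N - 1) * u t ^ N) ^ q) ^ N := by gcongr
    _ = _ := by rw [mul_pow, setLIntegral_Ioc_one_inv_eq_log hr, hpN, hqN]

def IsUpperGradientOn {F : Type*} [NormedAddCommGroup F] (f : ℝ → F) (d : ℝ → ℝ≥0∞)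
    (s : Set ℝ) : Prop :=
  ∀ ⦃a b⦄, a ∈ s → b ∈ s → a ≤ b → ‖f b - f a‖ₑ ≤ ∫⁻ t in Ioc a b, d t

theorem ContDiff.isUpperGradientOn_smul {E F : Type*} [NormedAddCommGroup E] [NormedSpace ℝ E]
    [NormedAddCommGroup F] [NormedSpace ℝ F] {φ : E → F} (hφ : ContDiff ℝ 1 φ) {v : E}
    (hv : ‖v‖ ≤ 1) :
    IsUpperGradientOn (fun t : ℝ => φ (t • v)) (fun t => ‖fderiv ℝ φ (t • v)‖ₑ) univ := by
  intro a b _ _ hab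
  have hγ : ContDiff ℝ 1 fun t : ℝ => φ (t • v) := hφ.comp (contDiff_id.smul contDiff_const)
  have hderiv : ∀ t, deriv (fun t : ℝ => φ (t • v)) t = fderiv ℝ φ (t • v) v := fun t => by
    simpa [Function.comp_def] using ((hφ.differentiable one_ne_zero (t • v)).hasFDerivAt
      |>.comp_hasDerivAt t ((hasDerivAt_id t).smul_const v)).deriv
  calc ‖φ (b • v) - φ (a • v)‖ₑ
      ≤ ∫⁻ t in Icc a b, ‖deriv (fun t : ℝ => φ (t • v)) t‖ₑ :=
        enorm_sub_le_lintegral_deriv_of_contDiffOn_Icc hγ.contDiffOn hab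
    _ ≤ ∫⁻ t in Ioc a b, ‖fderiv ℝ φ (t • v)‖ₑ := by
        rw [← restrict_Ioc_eq_restrict_Icc]
        refine lintegral_mono fun t => ?_
        rw [hderiv]
        calc ‖fderiv ℝ φ (t • v) v‖ₑ ≤ ‖fderiv ℝ φ (t • v)‖ₑ * ‖v‖ₑ :=
              ContinuousLinearMap.le_opENorm _ _
          _ ≤ ‖fderiv ℝ φ (t • v)‖ₑ := by
              refine mul_le_of_le_one_right' ?_
              rw [← ofReal_norm]
              exact ENNReal.ofReal_le_one.2 hv

namespace IsUpperGradientOn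

variable {F : Type*} [NormedAddCommGroup F] {f : ℝ → F} {d : ℝ → ℝ≥0∞} {s : Set ℝ}

theorem mono {t : Set ℝ} (h : IsUpperGradientOn f d t) (hst : s ⊆ t) : IsUpperGradientOn f d s :=
  fun _ _ ha hb hab => h (hst ha) (hst hb) hab

theorem enorm_right_le (h : IsUpperGradientOn f d s) {a b : ℝ} (ha : a ∈ s) (hb : b ∈ s)
    (hab : a ≤ b) : ‖f b‖ₑ ≤ ‖f a‖ₑ + ∫⁻ t in Ioc a b, d t :=
  calc ‖f b‖ₑ = ‖f a + (f b - f a)‖ₑ := by rw [add_sub_cancel]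
    _ ≤ ‖f a‖ₑ + ‖f b - f a‖ₑ := enorm_add_le _ _
    _ ≤ _ := by gcongr; exact h ha hb hab

theorem enorm_left_le (h : IsUpperGradientOn f d s) {a b : ℝ} (ha : a ∈ s) (hb : b ∈ s)
    (hab : a ≤ b) : ‖f a‖ₑ ≤ ‖f b‖ₑ + ∫⁻ t in Ioc a b, d t :=
  calc ‖f a‖ₑ = ‖f b - (f b - f a)‖ₑ := by rw [sub_sub_cancel]
    _ ≤ ‖f b‖ₑ + ‖f b - f a‖ₑ := enorm_sub_le
    _ ≤ _ := by gcongr; exact h ha hb hab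

variable {N : ℕ}

theorem enorm_pow_le (h : IsUpperGradientOn f d (Ici 1)) (hN : 1 ≤ N) (hd : Measurable d)
    {r : ℝ} (hr : 1 ≤ r) :
    ‖f r‖ₑ ^ N ≤ 2 ^ (N - 1) * (‖f 1‖ₑ ^ N + ENNReal.ofReal (Real.log r) ^ (N - 1) *
      ∫⁻ t in Ioi 1, ENNReal.ofReal t ^ (N - 1) * d t ^ N) :=
  calc ‖f r‖ₑ ^ N ≤ (‖f 1‖ₑ + ∫⁻ t in Ioc 1 r, d t) ^ N := by
        gcongr; exact h.enorm_right_le self_mem_Ici hr hr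
    _ ≤ 2 ^ (N - 1) * (‖f 1‖ₑ ^ N + (∫⁻ t in Ioc 1 r, d t) ^ N) := ENNReal.add_pow_le _ _ _
    _ ≤ _ := by
        grw [setLIntegral_Ioc_one_pow_le hN hr hd, Ioc_subset_Ioi_self]

theorem enorm_one_pow_le (h : IsUpperGradientOn f d (Ici 1)) (hN : 1 ≤ N) (hd : Measurable d) :
    ‖f 1‖ₑ ^ N ≤
      2 ^ (N - 1) * ∫⁻ t in Ioi 1, ENNReal.ofReal t ^ (N - 1) * (‖f t‖ₑ ^ N + d t ^ N) := by
  set J := ∫⁻ t in Ioc 1 2, d t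
  have hJ : J ^ N ≤ ∫⁻ t in Ioc 1 2, ENNReal.ofReal t ^ (N - 1) * d t ^ N := by
    refine (setLIntegral_Ioc_one_pow_le hN one_le_two hd).trans (mul_le_of_le_one_left' ?_)
    refine pow_le_one₀ zero_le (ENNReal.ofReal_le_one.2 ?_)
    linarith [Real.log_le_sub_one_of_pos (zero_lt_two : (0 : ℝ) < 2)]
  have hpt : ∀ s ∈ Ioc (1 : ℝ) 2,
      ‖f 1‖ₑ ^ N ≤ 2 ^ (N - 1) * (ENNReal.ofReal s ^ (N - 1) * ‖f s‖ₑ ^ N + J ^ N) := by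
    intro s hs
    calc ‖f 1‖ₑ ^ N ≤ (‖f s‖ₑ + J) ^ N := by
          gcongr
          refine (h.enorm_left_le self_mem_Ici hs.1.le hs.1.le).trans ?_
          gcongr
          exact lintegral_mono_set (Ioc_subset_Ioc_right hs.2)
      _ ≤ 2 ^ (N - 1) * (‖f s‖ₑ ^ N + J ^ N) := ENNReal.add_pow_le _ _ _
      _ ≤ _ := by
          gcongr
          exact le_mul_of_one_le_left' (one_le_pow₀ (ENNReal.one_le_ofReal.2 hs.1.le))
  have hmeas : Measurable fun t => ENNReal.ofReal t ^ (N - 1) * d t ^ N := by fun_prop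
  calc ‖f 1‖ₑ ^ N = ∫⁻ _ in Ioc (1 : ℝ) 2, ‖f 1‖ₑ ^ N := by norm_num
    _ ≤ ∫⁻ s in Ioc (1 : ℝ) 2, 2 ^ (N - 1) * (ENNReal.ofReal s ^ (N - 1) * ‖f s‖ₑ ^ N + J ^ N) :=
        setLIntegral_mono' measurableSet_Ioc hpt
    _ = 2 ^ (N - 1) *
          ((∫⁻ s in Ioc (1 : ℝ) 2, ENNReal.ofReal s ^ (N - 1) * ‖f s‖ₑ ^ N) + J ^ N) := by
        rw [lintegral_const_mul' _ _ (by simp), lintegral_add_right _ measurable_const]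
        norm_num
    _ ≤ 2 ^ (N - 1) *
          ∫⁻ s in Ioc (1 : ℝ) 2, ENNReal.ofReal s ^ (N - 1) * (‖f s‖ₑ ^ N + d s ^ N) := by
        grw [hJ, ← lintegral_add_right _ hmeas]
        simp only [mul_add, le_refl]
    _ ≤ _ := by grw [Ioc_subset_Ioi_self]

theorem enorm_pow_le_mul_log (h : IsUpperGradientOn f d (Ici 1)) (hN : 1 ≤ N) (hd : Measurable d)
    {r : ℝ} (hr : 1 ≤ r) :
    ‖f r‖ₑ ^ N ≤ 2 ^ (N - 1) * (2 ^ (N - 1) + 1) * ENNReal.ofReal (1 + Real.log r) ^ (N - 1) *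
      ∫⁻ t in Ioi 1, ENNReal.ofReal t ^ (N - 1) * (‖f t‖ₑ ^ N + d t ^ N) := by
  set M := ∫⁻ t in Ioi 1, ENNReal.ofReal t ^ (N - 1) * (‖f t‖ₑ ^ N + d t ^ N)
  have hlog := Real.log_nonneg hr
  have hdM : ∫⁻ t in Ioi 1, ENNReal.ofReal t ^ (N - 1) * d t ^ N ≤ M :=
    lintegral_mono fun t => by gcongr; exact le_add_self
  have hL : 1 ≤ ENNReal.ofReal (1 + Real.log r) ^ (N - 1) :=
    one_le_pow₀ (ENNReal.one_le_ofReal.2 (by linarith))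
  have hlogL :
      ENNReal.ofReal (Real.log r) ^ (N - 1) ≤ ENNReal.ofReal (1 + Real.log r) ^ (N - 1) := by
    gcongr; linarith
  set L := ENNReal.ofReal (1 + Real.log r) ^ (N - 1)
  calc ‖f r‖ₑ ^ N ≤ 2 ^ (N - 1) * (‖f 1‖ₑ ^ N + ENNReal.ofReal (Real.log r) ^ (N - 1) *
        ∫⁻ t in Ioi 1, ENNReal.ofReal t ^ (N - 1) * d t ^ N) := h.enorm_pow_le hN hd hr
    _ ≤ 2 ^ (N - 1) * (2 ^ (N - 1) * M * L + L * M) := by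
        grw [h.enorm_one_pow_le hN hd, hdM, hlogL, ← le_mul_of_one_le_right' hL]
    _ = _ := by ring

theorem lintegral_mul_enorm_pow_le (h : IsUpperGradientOn f d (Ici 1)) (hN : 1 ≤ N)
    (hd : Measurable d) {w : ℝ → ℝ≥0∞} (hw : Measurable w) :
    ∫⁻ r in Ioi 1, ENNReal.ofReal r ^ (N - 1) * (w r * ‖f r‖ₑ ^ N) ≤
      2 ^ (N - 1) * (2 ^ (N - 1) + 1) *
        (∫⁻ r in Ioi 1, w r * ENNReal.ofReal ((r * (1 + Real.log r)) ^ (N - 1))) *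
        ∫⁻ t in Ioi 1, ENNReal.ofReal t ^ (N - 1) * (‖f t‖ₑ ^ N + d t ^ N) := by
  set K : ℝ≥0∞ := 2 ^ (N - 1) * (2 ^ (N - 1) + 1)
  set M := ∫⁻ t in Ioi 1, ENNReal.ofReal t ^ (N - 1) * (‖f t‖ₑ ^ N + d t ^ N)
  calc ∫⁻ r in Ioi 1, ENNReal.ofReal r ^ (N - 1) * (w r * ‖f r‖ₑ ^ N)
      ≤ ∫⁻ r in Ioi 1, ENNReal.ofReal r ^ (N - 1) *
          (w r * (K * ENNReal.ofReal (1 + Real.log r) ^ (N - 1) * M)) :=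
        setLIntegral_mono' measurableSet_Ioi fun r hr => by
          grw [h.enorm_pow_le_mul_log hN hd (le_of_lt hr)]
    _ = ∫⁻ r in Ioi 1, w r * ENNReal.ofReal ((r * (1 + Real.log r)) ^ (N - 1)) * (K * M) := by
        refine setLIntegral_congr_fun measurableSet_Ioi fun r (hr : 1 < r) => ?_
        have := Real.log_nonneg hr.le
        rw [ENNReal.ofReal_pow (by positivity), ENNReal.ofReal_mul (by positivity), mul_pow]
        ring
    _ = _ := by rw [lintegral_mul_const _ (by fun_prop)]; ring

end IsUpperGradientOn

theorem ContDiff.setLIntegral_Ioi_one_weight_mul_pow_le {E : Type*} [NormedAddCommGroup E]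
    [NormedSpace ℝ E] {φ : E → ℝ} (hφ : ContDiff ℝ 1 φ) {N : ℕ} (hN : 1 ≤ N) {g : ℝ → ℝ}
    (hg : Measurable g) (hg0 : ∀ r, 1 < r → 0 ≤ g r) {ω : E} (hω : ‖ω‖ = 1) :
    ∫⁻ r in Ioi 1, ENNReal.ofReal r ^ (N - 1) * ENNReal.ofReal (g ‖r • ω‖ * |φ (r • ω)| ^ N) ≤
      2 ^ (N - 1) * (2 ^ (N - 1) + 1) *
        (∫⁻ r in Ioi 1, ENNReal.ofReal (g r) * ENNReal.ofReal ((r * (1 + Real.log r)) ^ (N - 1))) *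
        ∫⁻ r in Ioi 1, ENNReal.ofReal r ^ (N - 1) *
          (ENNReal.ofReal (|φ (r • ω)| ^ N) + ENNReal.ofReal (‖fderiv ℝ φ (r • ω)‖ ^ N)) := by
  have hφN : ∀ x, ENNReal.ofReal (|φ x| ^ N) = ‖φ x‖ₑ ^ N := fun x => by
    rw [Real.enorm_eq_ofReal_abs, ENNReal.ofReal_pow (abs_nonneg _)]
  have hDφN : ∀ x, ENNReal.ofReal (‖fderiv ℝ φ x‖ ^ N) = ‖fderiv ℝ φ x‖ₑ ^ N := fun x => by
    rw [← ofReal_norm, ENNReal.ofReal_pow (norm_nonneg _)]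
  have hDφ : Continuous (fderiv ℝ φ) := hφ.continuous_fderiv one_ne_zero
  have hray := (hφ.isUpperGradientOn_smul hω.le).mono (subset_univ (Ici 1))
  simp_rw [hφN, hDφN]
  calc _ = ∫⁻ r in Ioi 1,
        ENNReal.ofReal r ^ (N - 1) * (ENNReal.ofReal (g r) * ‖φ (r • ω)‖ₑ ^ N) := by
        refine setLIntegral_congr_fun measurableSet_Ioi fun r (hr : 1 < r) => ?_
        rw [norm_smul, hω, mul_one, Real.norm_of_nonneg (by linarith),
          ENNReal.ofReal_mul (hg0 r hr), hφN]
    _ ≤ _ := hray.lintegral_mul_enorm_pow_le hN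
          (by fun_prop : Continuous fun t : ℝ => ‖fderiv ℝ φ (t • ω)‖ₑ).measurable hg.ennreal_ofReal

theorem weighted_embedding_exterior_critical (N : ℕ) (hN : 2 ≤ N) :
    ∃ C : ℝ, 0 < C ∧
      ∀ (g : ℝ → ℝ), Measurable g → (∀ r, 1 < r → 0 ≤ g r) →
        IntegrableOn (fun r => g r * (r * (1 + Real.log r)) ^ (N - 1)) (Ioi 1) →
      ∀ (φ : EuclideanSpace ℝ (Fin N) → ℝ), ContDiff ℝ 1 φ →
        ∫⁻ x in {x : EuclideanSpace ℝ (Fin N) | 1 < ‖x‖},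
            ENNReal.ofReal (g ‖x‖ * |φ x| ^ N) ≤
          ENNReal.ofReal (C * ∫ r in Ioi (1 : ℝ), g r * (r * (1 + Real.log r)) ^ (N - 1)) *
            ((∫⁻ x in {x : EuclideanSpace ℝ (Fin N) | 1 < ‖x‖}, ENNReal.ofReal (|φ x| ^ N)) +
              ∫⁻ x in {x : EuclideanSpace ℝ (Fin N) | 1 < ‖x‖},
                ENNReal.ofReal (‖fderiv ℝ φ x‖ ^ N)) := by
  refine ⟨(2 ^ (N - 1) * (2 ^ (N - 1) + 1) : ℕ), by positivity, fun g hg hg0 hgint φ hφ => ?_⟩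
  have hφm : Measurable φ := hφ.continuous.measurable
  have hDφm : Measurable (fderiv ℝ φ) := (hφ.continuous_fderiv one_ne_zero).measurable
  have hweight := ofReal_setIntegral_mul_eq_setLIntegral measurableSet_Ioi hg0
    (fun r (hr : 1 < r) => by have := Real.log_nonneg hr.le; positivity) hgint
  have hW : ENNReal.ofReal ((2 ^ (N - 1) * (2 ^ (N - 1) + 1) : ℕ) : ℝ) *
      ∫⁻ r in Ioi 1, ENNReal.ofReal (g r) * ENNReal.ofReal ((r * (1 + Real.log r)) ^ (N - 1)) ≠ ⊤ :=
    hweight ▸ ENNReal.mul_ne_top ENNReal.ofReal_ne_top ENNReal.ofReal_ne_top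
  rw [ENNReal.ofReal_mul (by positivity), hweight, ← lintegral_add_left (by fun_prop),
    lintegral_lt_norm_eq_lintegral_sphere _ (by fun_prop) zero_le_one,
    lintegral_lt_norm_eq_lintegral_sphere _ (by fun_prop) zero_le_one, finrank_euclideanSpace_fin,
    ← lintegral_const_mul' _ _ hW, ENNReal.ofReal_natCast]
  push_cast
  exact lintegral_mono fun ω =>
    hφ.setLIntegral_Ioi_one_weight_mul_pow_le (by omega) hg hg0 (norm_eq_of_mem_sphere ω)
end
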